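/- arXiv:0902.2332 — 7 statements merged into one kernel-verified Lean document; each statement's English description precedes it below -/
import Mathlib

section
/- Under assumptions (S1)–(S3), the structure function c satisfies the identity c'' + b c' + ε c = L_H b on U × ℝ, where L_H b(q,θ) = (∇_q b(q,θ))·f(q,θ) − c(q,θ) ∂b/∂θ(q,θ) is the derivative of b along the Hamiltonian field H. -/
open Set

noncomputable section

/-- The Lie bracket `[X,Y](q) = DY(q)·X(q) − DX(q)·Y(q)` of vector fields on (an open
subset of) `ℝ²`. -/
def lieBracket2 (X Y : ℝ × ℝ → ℝ × ℝ) : ℝ × ℝ → ℝ × ℝ :=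
  fun q => fderiv ℝ Y q (X q) - fderiv ℝ X q (Y q)

/-- The Lie derivative of a function `a` on `U × ℝ` along the Hamiltonian field
`H(q,θ) = (f(q,θ), −c(q,θ))`:  `L_H a (q,θ) = (∇_q a)·f − c ∂a/∂θ`. -/
def LH (f : ℝ × ℝ → ℝ → ℝ × ℝ) (c : ℝ × ℝ → ℝ → ℝ) (a : ℝ × ℝ → ℝ → ℝ) :
    ℝ × ℝ → ℝ → ℝ :=
  fun q θ => fderiv ℝ (fun p => a p θ) q (f q θ) - c q θ * deriv (a q) θ

/-- The Lie derivative of a function `a` on `U × ℝ` along the field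
`H'(q,θ) = (f'(q,θ), −c'(q,θ))`:  `L_{H'} a (q,θ) = (∇_q a)·f' − c' ∂a/∂θ`. -/
def LH' (f : ℝ × ℝ → ℝ → ℝ × ℝ) (c : ℝ × ℝ → ℝ → ℝ) (a : ℝ × ℝ → ℝ → ℝ) :
    ℝ × ℝ → ℝ → ℝ :=
  fun q θ => fderiv ℝ (fun p => a p θ) q (deriv (f q) θ) - deriv (c q) θ * deriv (a q) θ

/-- The control curvature `κ := L_{H'} c − L_H c'` in the coordinates `(q,θ)`. -/
def controlCurvature (f : ℝ × ℝ → ℝ → ℝ × ℝ) (c : ℝ × ℝ → ℝ → ℝ) : ℝ × ℝ → ℝ → ℝ :=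
  fun q θ => LH' f c c q θ - LH f c (fun p t => deriv (c p) t) q θ

/-- The Lie bracket of vector fields on (an open subset of) `ℝ³ = (ℝ × ℝ) × ℝ`. -/
def lieBracket3 (X Y : (ℝ × ℝ) × ℝ → (ℝ × ℝ) × ℝ) : (ℝ × ℝ) × ℝ → (ℝ × ℝ) × ℝ :=
  fun p => fderiv ℝ Y p (X p) - fderiv ℝ X p (Y p)

/-- The Hamiltonian vector field `H(q,θ) = (f(q,θ), −c(q,θ))` on `U × ℝ ⊆ ℝ³`. -/
def Ham (f : ℝ × ℝ → ℝ → ℝ × ℝ) (c : ℝ × ℝ → ℝ → ℝ) : (ℝ × ℝ) × ℝ → (ℝ × ℝ) × ℝ :=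
  fun p => (f p.1 p.2, -c p.1 p.2)

/-- The vertical vector field `V(q,θ) = (0,0,1)` on `U × ℝ ⊆ ℝ³`. -/
def Vert : (ℝ × ℝ) × ℝ → (ℝ × ℝ) × ℝ :=
  fun _ => ((0, 0), 1)

end

namespace StructureAux

def E3 : (ℝ × ℝ) × ℝ := ((0, 0), 1)

def J2 : (ℝ × ℝ) →L[ℝ] (ℝ × ℝ) × ℝ := (ContinuousLinearMap.id ℝ (ℝ × ℝ)).prod 0

@[simp] lemma J2_apply (w : ℝ × ℝ) : J2 w = (w, 0) := rfl

variable {E : Type*} [NormedAddCommGroup E] [NormedSpace ℝ E]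

lemma slice_hasDerivAt (a : ℝ × ℝ → ℝ → E) {q : ℝ × ℝ} {θ : ℝ}
    (hd : DifferentiableAt ℝ (fun p : (ℝ × ℝ) × ℝ => a p.1 p.2) (q, θ)) :
    HasDerivAt (a q) (fderiv ℝ (fun p : (ℝ × ℝ) × ℝ => a p.1 p.2) (q, θ) E3) θ := by
  have h1 : HasDerivAt (fun t : ℝ => ((q, t) : (ℝ × ℝ) × ℝ)) E3 θ :=
    HasDerivAt.prodMk (hasDerivAt_const θ q) (hasDerivAt_id θ)
  exact hd.hasFDerivAt.comp_hasDerivAt θ h1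

lemma slice_hasFDerivAt (a : ℝ × ℝ → ℝ → E) {q : ℝ × ℝ} {θ : ℝ}
    (hd : DifferentiableAt ℝ (fun p : (ℝ × ℝ) × ℝ => a p.1 p.2) (q, θ)) :
    HasFDerivAt (fun x => a x θ)
      ((fderiv ℝ (fun p : (ℝ × ℝ) × ℝ => a p.1 p.2) (q, θ)).comp J2) q := by
  have h1 : HasFDerivAt (fun x : ℝ × ℝ => ((x, θ) : (ℝ × ℝ) × ℝ)) J2 q :=
    HasFDerivAt.prodMk (hasFDerivAt_id q) (hasFDerivAt_const θ q)
  exact hd.hasFDerivAt.comp q h1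

lemma fderiv_slice (a : ℝ × ℝ → ℝ → E) {q : ℝ × ℝ} {θ : ℝ}
    (hd : DifferentiableAt ℝ (fun p : (ℝ × ℝ) × ℝ => a p.1 p.2) (q, θ)) (w : ℝ × ℝ) :
    fderiv ℝ (fun x => a x θ) q w
      = fderiv ℝ (fun p : (ℝ × ℝ) × ℝ => a p.1 p.2) (q, θ) (w, 0) := by
  rw [(slice_hasFDerivAt a hd).fderiv]
  simp

end StructureAux

open StructureAux

/-- **Lemma 2.** Under assumptions (S1)–(S3), the structure function `c` satisfies
`c'' + b c' + ε c = L_H b` on `U × ℝ`. -/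
theorem structure_function_identity
    (U : Set (ℝ × ℝ)) (hU : IsOpen U) (hUconn : IsConnected U)
    (ε : ℝ) (hε : ε = 1 ∨ ε = -1)
    (f : ℝ × ℝ → ℝ → ℝ × ℝ) (b c : ℝ × ℝ → ℝ → ℝ)
    (hf : ContDiffOn ℝ (⊤ : ℕ∞) (fun p : (ℝ × ℝ) × ℝ => f p.1 p.2) (U ×ˢ univ))
    (hb : ContDiffOn ℝ (⊤ : ℕ∞) (fun p : (ℝ × ℝ) × ℝ => b p.1 p.2) (U ×ˢ univ))
    (hc : ContDiffOn ℝ (⊤ : ℕ∞) (fun p : (ℝ × ℝ) × ℝ => c p.1 p.2) (U ×ˢ univ))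
    (hS1 : ∀ q ∈ U, ∀ θ : ℝ, LinearIndependent ℝ ![f q θ, deriv (f q) θ])
    (hS2 : ∀ q ∈ U, ∀ θ : ℝ,
      deriv (deriv (f q)) θ = -(ε • f q θ) - b q θ • deriv (f q) θ)
    (hS3 : ∀ θ : ℝ, ∀ q ∈ U,
      lieBracket2 (fun p => f p θ) (fun p => deriv (f p) θ) q
        = -((ε * c q θ) • f q θ) - (deriv (c q) θ + b q θ * c q θ) • deriv (f q) θ) :
    ∀ q ∈ U, ∀ θ : ℝ,
      deriv (deriv (c q)) θ + b q θ * deriv (c q) θ + ε * c q θ = LH f c b q θ := by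
  have hsopen : IsOpen (U ×ˢ (univ : Set ℝ)) := hU.prod isOpen_univ
  -- pointwise smoothness / differentiability of F, B, C
  have hFc : ∀ x ∈ U, ∀ t : ℝ,
      ContDiffAt ℝ (⊤ : ℕ∞) (fun p : (ℝ × ℝ) × ℝ => f p.1 p.2) (x, t) :=
    fun x hx t => hf.contDiffAt (hsopen.mem_nhds ⟨hx, trivial⟩)
  have hFd : ∀ x ∈ U, ∀ t : ℝ,
      DifferentiableAt ℝ (fun p : (ℝ × ℝ) × ℝ => f p.1 p.2) (x, t) :=
    fun x hx t => (hFc x hx t).differentiableAt (by simp)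
  have hBc : ∀ x ∈ U, ∀ t : ℝ,
      ContDiffAt ℝ (⊤ : ℕ∞) (fun p : (ℝ × ℝ) × ℝ => b p.1 p.2) (x, t) :=
    fun x hx t => hb.contDiffAt (hsopen.mem_nhds ⟨hx, trivial⟩)
  have hBd : ∀ x ∈ U, ∀ t : ℝ,
      DifferentiableAt ℝ (fun p : (ℝ × ℝ) × ℝ => b p.1 p.2) (x, t) :=
    fun x hx t => (hBc x hx t).differentiableAt (by simp)
  have hCc : ∀ x ∈ U, ∀ t : ℝ,
      ContDiffAt ℝ (⊤ : ℕ∞) (fun p : (ℝ × ℝ) × ℝ => c p.1 p.2) (x, t) :=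
    fun x hx t => hc.contDiffAt (hsopen.mem_nhds ⟨hx, trivial⟩)
  have hCd : ∀ x ∈ U, ∀ t : ℝ,
      DifferentiableAt ℝ (fun p : (ℝ × ℝ) × ℝ => c p.1 p.2) (x, t) :=
    fun x hx t => (hCc x hx t).differentiableAt (by simp)
  -- θ-derivatives of slices
  have hD1 : ∀ x ∈ U, ∀ t : ℝ, HasDerivAt (f x)
      (fderiv ℝ (fun p : (ℝ × ℝ) × ℝ => f p.1 p.2) (x, t) E3) t :=
    fun x hx t => slice_hasDerivAt f (hFd x hx t)
  -- smoothness of G := ∂f/∂θ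
  have hGsm : ContDiffOn ℝ (⊤ : ℕ∞) (fun p : (ℝ × ℝ) × ℝ => deriv (f p.1) p.2) (U ×ˢ univ) := by
    have h1 : ContDiffOn ℝ (⊤ : ℕ∞) (fun p : (ℝ × ℝ) × ℝ =>
        fderiv ℝ (fun p : (ℝ × ℝ) × ℝ => f p.1 p.2) p E3) (U ×ˢ univ) :=
      (hf.fderiv_of_isOpen hsopen (by simp)).clm_apply contDiffOn_const
    exact h1.congr fun p hp => (hD1 p.1 hp.1 p.2).deriv
  have hGc : ∀ x ∈ U, ∀ t : ℝ,
      ContDiffAt ℝ (⊤ : ℕ∞) (fun p : (ℝ × ℝ) × ℝ => deriv (f p.1) p.2) (x, t) :=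
    fun x hx t => hGsm.contDiffAt (hsopen.mem_nhds ⟨hx, trivial⟩)
  have hGd : ∀ x ∈ U, ∀ t : ℝ,
      DifferentiableAt ℝ (fun p : (ℝ × ℝ) × ℝ => deriv (f p.1) p.2) (x, t) :=
    fun x hx t => (hGc x hx t).differentiableAt (by simp)
  have hD2 : ∀ x ∈ U, ∀ t : ℝ, HasDerivAt (deriv (f x))
      (fderiv ℝ (fun p : (ℝ × ℝ) × ℝ => deriv (f p.1) p.2) (x, t) E3) t :=
    fun x hx t => slice_hasDerivAt (fun x t => deriv (f x) t) (hGd x hx t)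
  -- smoothness of C1 := ∂c/∂θ
  have hD1c : ∀ x ∈ U, ∀ t : ℝ, HasDerivAt (c x)
      (fderiv ℝ (fun p : (ℝ × ℝ) × ℝ => c p.1 p.2) (x, t) E3) t :=
    fun x hx t => slice_hasDerivAt c (hCd x hx t)
  have hC1sm : ContDiffOn ℝ (⊤ : ℕ∞) (fun p : (ℝ × ℝ) × ℝ => deriv (c p.1) p.2) (U ×ˢ univ) := by
    have h1 : ContDiffOn ℝ (⊤ : ℕ∞) (fun p : (ℝ × ℝ) × ℝ =>
        fderiv ℝ (fun p : (ℝ × ℝ) × ℝ => c p.1 p.2) p E3) (U ×ˢ univ) :=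
      (hc.fderiv_of_isOpen hsopen (by simp)).clm_apply contDiffOn_const
    exact h1.congr fun p hp => (hD1c p.1 hp.1 p.2).deriv
  have hC1d : ∀ x ∈ U, ∀ t : ℝ,
      DifferentiableAt ℝ (fun p : (ℝ × ℝ) × ℝ => deriv (c p.1) p.2) (x, t) :=
    fun x hx t => (hC1sm.contDiffAt (hsopen.mem_nhds ⟨hx, trivial⟩)).differentiableAt (by simp)
  intro q hq θ
  -- basic one-variable derivatives at (q, θ)
  have hfq : HasDerivAt (f q) (deriv (f q) θ) θ :=
    (hD1 q hq θ).differentiableAt.hasDerivAt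
  have hgq : HasDerivAt (deriv (f q)) (deriv (deriv (f q)) θ) θ :=
    (hD2 q hq θ).differentiableAt.hasDerivAt
  have hbq : HasDerivAt (b q) (deriv (b q) θ) θ :=
    (slice_hasDerivAt b (hBd q hq θ)).differentiableAt.hasDerivAt
  have hcq : HasDerivAt (c q) (deriv (c q) θ) θ :=
    (hD1c q hq θ).differentiableAt.hasDerivAt
  have hc1q : HasDerivAt (deriv (c q)) (deriv (deriv (c q)) θ) θ :=
    (slice_hasDerivAt (fun x t => deriv (c x) t) (hC1d q hq θ)).differentiableAt.hasDerivAt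
  -- differentiability of fderiv of F and G at (q, θ)
  have hdF2 : DifferentiableAt ℝ
      (fderiv ℝ (fun p : (ℝ × ℝ) × ℝ => f p.1 p.2)) (q, θ) :=
    ((hFc q hq θ).fderiv_right (m := 1) (by exact WithTop.coe_le_coe.mpr le_top)).differentiableAt (by simp)
  have hdG2 : DifferentiableAt ℝ
      (fderiv ℝ (fun p : (ℝ × ℝ) × ℝ => deriv (f p.1) p.2)) (q, θ) :=
    ((hGc q hq θ).fderiv_right (m := 1) (by exact WithTop.coe_le_coe.mpr le_top)).differentiableAt (by simp)
  -- derivative in θ of the CLM-families t ↦ fderiv F (q,t), t ↦ fderiv G (q,t)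
  have hAF : HasDerivAt (fun t => fderiv ℝ (fun p : (ℝ × ℝ) × ℝ => f p.1 p.2) (q, t))
      (fderiv ℝ (fderiv ℝ (fun p : (ℝ × ℝ) × ℝ => f p.1 p.2)) (q, θ) E3) θ :=
    slice_hasDerivAt (fun x t => fderiv ℝ (fun p : (ℝ × ℝ) × ℝ => f p.1 p.2) (x, t)) hdF2
  have hAG : HasDerivAt (fun t => fderiv ℝ (fun p : (ℝ × ℝ) × ℝ => deriv (f p.1) p.2) (q, t))
      (fderiv ℝ (fderiv ℝ (fun p : (ℝ × ℝ) × ℝ => deriv (f p.1) p.2)) (q, θ) E3) θ :=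
    slice_hasDerivAt
      (fun x t => fderiv ℝ (fun p : (ℝ × ℝ) × ℝ => deriv (f p.1) p.2) (x, t)) hdG2
  -- symmetry of second derivatives
  have hsymF : IsSymmSndFDerivAt ℝ (fun p : (ℝ × ℝ) × ℝ => f p.1 p.2) (q, θ) :=
    (hFc q hq θ).isSymmSndFDerivAt (by
      rw [minSmoothness_of_isRCLikeNormedField]; exact WithTop.coe_le_coe.mpr le_top)
  have hsymG : IsSymmSndFDerivAt ℝ (fun p : (ℝ × ℝ) × ℝ => deriv (f p.1) p.2) (q, θ) :=
    (hGc q hq θ).isSymmSndFDerivAt (by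
      rw [minSmoothness_of_isRCLikeNormedField]; exact WithTop.coe_le_coe.mpr le_top)
  -- the bracket identity, rewritten through the 3D picture
  have hΦΨ : ∀ t : ℝ,
      fderiv ℝ (fun p : (ℝ × ℝ) × ℝ => deriv (f p.1) p.2) (q, t) (f q t, 0)
        - fderiv ℝ (fun p : (ℝ × ℝ) × ℝ => f p.1 p.2) (q, t) (deriv (f q) t, 0)
      = -((ε * c q t) • f q t) - (deriv (c q) t + b q t * c q t) • deriv (f q) t := by
    intro t
    have h3 := hS3 t q hq
    simp only [lieBracket2] at h3
    rw [fderiv_slice (fun x t => deriv (f x) t) (hGd q hq t) (f q t),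
      fderiv_slice f (hFd q hq t) (deriv (f q) t)] at h3
    exact h3
  -- derivative of the left-hand side of the bracket identity
  have hT1 : HasDerivAt
      (fun t => fderiv ℝ (fun p : (ℝ × ℝ) × ℝ => deriv (f p.1) p.2) (q, t) (f q t, 0))
      (fderiv ℝ (fderiv ℝ (fun p : (ℝ × ℝ) × ℝ => deriv (f p.1) p.2)) (q, θ) E3 (f q θ, 0)
        + fderiv ℝ (fun p : (ℝ × ℝ) × ℝ => deriv (f p.1) p.2) (q, θ) (deriv (f q) θ, 0)) θ :=
    hAG.clm_apply (HasDerivAt.prodMk hfq (hasDerivAt_const θ (0 : ℝ)))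
  have hT2 : HasDerivAt
      (fun t => fderiv ℝ (fun p : (ℝ × ℝ) × ℝ => f p.1 p.2) (q, t) (deriv (f q) t, 0))
      (fderiv ℝ (fderiv ℝ (fun p : (ℝ × ℝ) × ℝ => f p.1 p.2)) (q, θ) E3 (deriv (f q) θ, 0)
        + fderiv ℝ (fun p : (ℝ × ℝ) × ℝ => f p.1 p.2) (q, θ) (deriv (deriv (f q)) θ, 0)) θ :=
    hAF.clm_apply (HasDerivAt.prodMk hgq (hasDerivAt_const θ (0 : ℝ)))
  have hΦ := hT1.sub hT2
  -- derivative of the right-hand side of the bracket identity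
  have hΨ : HasDerivAt
      (fun t => -((ε * c q t) • f q t) - (deriv (c q) t + b q t * c q t) • deriv (f q) t)
      (-((ε * c q θ) • deriv (f q) θ + (ε * deriv (c q) θ) • f q θ)
        - ((deriv (c q) θ + b q θ * c q θ) • deriv (deriv (f q)) θ
          + (deriv (deriv (c q)) θ + (deriv (b q) θ * c q θ + b q θ * deriv (c q) θ))
            • deriv (f q) θ)) θ :=
    (((hcq.const_mul ε).smul hfq).neg).sub ((hc1q.add (hbq.mul hcq)).smul hgq)
  have hΨ2 := hΨ.congr_of_eventuallyEq (Filter.Eventually.of_forall hΦΨ)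
  have heq := hΦ.unique hΨ2
  -- exchange of mixed partials in the two second-derivative terms
  have h2 : fderiv ℝ (fderiv ℝ (fun p : (ℝ × ℝ) × ℝ => deriv (f p.1) p.2)) (q, θ) E3 (f q θ, 0)
      = fderiv ℝ (fderiv ℝ (fun p : (ℝ × ℝ) × ℝ => deriv (f p.1) p.2)) (q, θ) (f q θ, 0) E3 :=
    hsymG E3 (f q θ, 0)
  have h3 : fderiv ℝ (fderiv ℝ (fun p : (ℝ × ℝ) × ℝ => f p.1 p.2)) (q, θ) E3 (deriv (f q) θ, 0)
      = fderiv ℝ (fderiv ℝ (fun p : (ℝ × ℝ) × ℝ => f p.1 p.2)) (q, θ) (deriv (f q) θ, 0) E3 :=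
    hsymF E3 (deriv (f q) θ, 0)
  -- identification of the exchanged terms with horizontal derivatives
  have hI2 : ∀ w : ℝ × ℝ,
      fderiv ℝ (fderiv ℝ (fun p : (ℝ × ℝ) × ℝ => f p.1 p.2)) (q, θ) (w, 0) E3
        = fderiv ℝ (fun p : (ℝ × ℝ) × ℝ => deriv (f p.1) p.2) (q, θ) (w, 0) := by
    intro w
    have e1 : HasFDerivAt
        (fun x : ℝ × ℝ => fderiv ℝ (fun p : (ℝ × ℝ) × ℝ => f p.1 p.2) (x, θ))
        ((fderiv ℝ (fderiv ℝ (fun p : (ℝ × ℝ) × ℝ => f p.1 p.2)) (q, θ)).comp J2) q :=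
      slice_hasFDerivAt
        (fun x t => fderiv ℝ (fun p : (ℝ × ℝ) × ℝ => f p.1 p.2) (x, t)) hdF2
    have e2 : HasFDerivAt
        (fun x : ℝ × ℝ => fderiv ℝ (fun p : (ℝ × ℝ) × ℝ => f p.1 p.2) (x, θ) E3)
        ((ContinuousLinearMap.apply ℝ (ℝ × ℝ) E3).comp
          ((fderiv ℝ (fderiv ℝ (fun p : (ℝ × ℝ) × ℝ => f p.1 p.2)) (q, θ)).comp J2)) q :=
      ((ContinuousLinearMap.apply ℝ (ℝ × ℝ) E3).hasFDerivAt).comp q e1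
    have e3 : (fun x : ℝ × ℝ => deriv (f x) θ) =ᶠ[nhds q]
        (fun x : ℝ × ℝ => fderiv ℝ (fun p : (ℝ × ℝ) × ℝ => f p.1 p.2) (x, θ) E3) := by
      filter_upwards [hU.mem_nhds hq] with x hx
      exact (hD1 x hx θ).deriv
    calc fderiv ℝ (fderiv ℝ (fun p : (ℝ × ℝ) × ℝ => f p.1 p.2)) (q, θ) (w, 0) E3
        = ((ContinuousLinearMap.apply ℝ (ℝ × ℝ) E3).comp
            ((fderiv ℝ (fderiv ℝ (fun p : (ℝ × ℝ) × ℝ => f p.1 p.2)) (q, θ)).comp J2)) w := by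
          simp
      _ = fderiv ℝ (fun x : ℝ × ℝ =>
            fderiv ℝ (fun p : (ℝ × ℝ) × ℝ => f p.1 p.2) (x, θ) E3) q w := by
          rw [e2.fderiv]
      _ = fderiv ℝ (fun x : ℝ × ℝ => deriv (f x) θ) q w := by rw [e3.fderiv_eq]
      _ = fderiv ℝ (fun p : (ℝ × ℝ) × ℝ => deriv (f p.1) p.2) (q, θ) (w, 0) :=
          fderiv_slice (fun x t => deriv (f x) t) (hGd q hq θ) w
  -- second derivative of f in θ, as a function of q, via (S2)
  have hX : fderiv ℝ (fderiv ℝ (fun p : (ℝ × ℝ) × ℝ => deriv (f p.1) p.2)) (q, θ)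
        (f q θ, 0) E3
      = -(ε • (fderiv ℝ (fun p : (ℝ × ℝ) × ℝ => f p.1 p.2) (q, θ) (f q θ, 0)))
        - (b q θ • (fderiv ℝ (fun p : (ℝ × ℝ) × ℝ => deriv (f p.1) p.2) (q, θ) (f q θ, 0))
          + (fderiv ℝ (fun p : (ℝ × ℝ) × ℝ => b p.1 p.2) (q, θ) (f q θ, 0))
            • deriv (f q) θ) := by
    have e1 : HasFDerivAt
        (fun x : ℝ × ℝ => fderiv ℝ (fun p : (ℝ × ℝ) × ℝ => deriv (f p.1) p.2) (x, θ))
        ((fderiv ℝ (fderiv ℝ (fun p : (ℝ × ℝ) × ℝ => deriv (f p.1) p.2)) (q, θ)).comp J2)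
        q :=
      slice_hasFDerivAt
        (fun x t => fderiv ℝ (fun p : (ℝ × ℝ) × ℝ => deriv (f p.1) p.2) (x, t)) hdG2
    have e2 : HasFDerivAt
        (fun x : ℝ × ℝ => fderiv ℝ (fun p : (ℝ × ℝ) × ℝ => deriv (f p.1) p.2) (x, θ) E3)
        ((ContinuousLinearMap.apply ℝ (ℝ × ℝ) E3).comp
          ((fderiv ℝ (fderiv ℝ (fun p : (ℝ × ℝ) × ℝ => deriv (f p.1) p.2)) (q, θ)).comp
            J2)) q :=
      ((ContinuousLinearMap.apply ℝ (ℝ × ℝ) E3).hasFDerivAt).comp q e1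
    have e3 : (fun x : ℝ × ℝ => deriv (deriv (f x)) θ) =ᶠ[nhds q]
        (fun x : ℝ × ℝ =>
          fderiv ℝ (fun p : (ℝ × ℝ) × ℝ => deriv (f p.1) p.2) (x, θ) E3) := by
      filter_upwards [hU.mem_nhds hq] with x hx
      exact (hD2 x hx θ).deriv
    have e4 : (fun x : ℝ × ℝ => deriv (deriv (f x)) θ) =ᶠ[nhds q]
        (fun x : ℝ × ℝ => -(ε • f x θ) - b x θ • deriv (f x) θ) := by
      filter_upwards [hU.mem_nhds hq] with x hx
      exact hS2 x hx θ
    have e5 : HasFDerivAt (fun x : ℝ × ℝ => -(ε • f x θ) - b x θ • deriv (f x) θ)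
        (-(ε • ((fderiv ℝ (fun p : (ℝ × ℝ) × ℝ => f p.1 p.2) (q, θ)).comp J2))
          - (b q θ • ((fderiv ℝ (fun p : (ℝ × ℝ) × ℝ => deriv (f p.1) p.2) (q, θ)).comp J2)
            + ((fderiv ℝ (fun p : (ℝ × ℝ) × ℝ => b p.1 p.2) (q, θ)).comp J2).smulRight
              (deriv (f q) θ))) q :=
      (((slice_hasFDerivAt f (hFd q hq θ)).const_smul ε).neg).sub
        ((slice_hasFDerivAt b (hBd q hq θ)).smul
          (slice_hasFDerivAt (fun x t => deriv (f x) t) (hGd q hq θ)))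
    calc fderiv ℝ (fderiv ℝ (fun p : (ℝ × ℝ) × ℝ => deriv (f p.1) p.2)) (q, θ)
          (f q θ, 0) E3
        = ((ContinuousLinearMap.apply ℝ (ℝ × ℝ) E3).comp
            ((fderiv ℝ (fderiv ℝ (fun p : (ℝ × ℝ) × ℝ => deriv (f p.1) p.2)) (q, θ)).comp
              J2)) (f q θ) := by simp
      _ = fderiv ℝ (fun x : ℝ × ℝ =>
            fderiv ℝ (fun p : (ℝ × ℝ) × ℝ => deriv (f p.1) p.2) (x, θ) E3) q (f q θ) := by
          rw [e2.fderiv]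
      _ = fderiv ℝ (fun x : ℝ × ℝ => deriv (deriv (f x)) θ) q (f q θ) := by
          rw [e3.fderiv_eq]
      _ = fderiv ℝ (fun x : ℝ × ℝ => -(ε • f x θ) - b x θ • deriv (f x) θ) q (f q θ) := by
          rw [e4.fderiv_eq]
      _ = _ := by
          rw [e5.fderiv]
          simp
  -- rewrite f'' inside the F-derivative using (S2)
  have hB : fderiv ℝ (fun p : (ℝ × ℝ) × ℝ => f p.1 p.2) (q, θ) (deriv (deriv (f q)) θ, 0)
      = -(ε • (fderiv ℝ (fun p : (ℝ × ℝ) × ℝ => f p.1 p.2) (q, θ) (f q θ, 0)))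
        - b q θ • (fderiv ℝ (fun p : (ℝ × ℝ) × ℝ => f p.1 p.2) (q, θ)
            (deriv (f q) θ, 0)) := by
    rw [hS2 q hq θ]
    have : ((-(ε • f q θ) - b q θ • deriv (f q) θ : ℝ × ℝ), (0 : ℝ))
        = -(ε • ((f q θ, 0) : (ℝ × ℝ) × ℝ)) - b q θ • ((deriv (f q) θ, 0) : (ℝ × ℝ) × ℝ) := by
      simp [Prod.ext_iff]
    rw [this, map_sub, map_neg, map_smul, map_smul]
  -- substitute everything into heq
  rw [h2, hX, h3, hI2, hB, hS2 q hq θ] at heq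
  -- extract the f'-coefficient using linear independence
  have key : (0 : ℝ) • f q θ
      + (deriv (deriv (c q)) θ + b q θ * deriv (c q) θ + ε * c q θ
        - (fderiv ℝ (fun p : (ℝ × ℝ) × ℝ => b p.1 p.2) (q, θ) (f q θ, 0)
          - c q θ * deriv (b q) θ)) • deriv (f q) θ = 0 := by
    linear_combination (norm := module) heq + (b q θ) • (hΦΨ θ)
  have hT := (LinearIndependent.pair_iff.mp (hS1 q hq θ) _ _ key).2
  show _ = fderiv ℝ (fun p => b p θ) q (f q θ) - c q θ * deriv (b q) θ
  rw [fderiv_slice b (hBd q hq θ) (f q θ)]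
  linarith
end

section
/- Under assumptions (S1)–(S3), the double Lie bracket [H,[V,H]] of the vector fields H and V on U × ℝ ⊆ ℝ³ is vertical, and more precisely [H,[V,H]] = κ·V where κ := L_{H'}c − L_H c' (so the control curvature has the coordinate expression L_{H'}c − L_H c'). -/
open Set ContinuousLinearMap

section helpers
variable {E : Type*} [NormedAddCommGroup E] [NormedSpace ℝ E]

lemma slice_vert (G : (ℝ × ℝ) × ℝ → E) (q : ℝ × ℝ) (θ : ℝ)
    (h : DifferentiableAt ℝ G (q, θ)) :
    HasDerivAt (fun t => G (q, t)) (fderiv ℝ G (q, θ) (((0,0) : ℝ × ℝ), (1:ℝ))) θ := by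
  have h1 : HasDerivAt (fun t : ℝ => ((q : ℝ × ℝ), t)) (((0,0) : ℝ × ℝ), (1:ℝ)) θ := by
    exact HasDerivAt.prodMk (hasDerivAt_const θ q) (hasDerivAt_id θ)
  exact h.hasFDerivAt.comp_hasDerivAt θ h1

lemma slice_horiz (G : (ℝ × ℝ) × ℝ → E) (q : ℝ × ℝ) (θ : ℝ)
    (h : DifferentiableAt ℝ G (q, θ)) :
    HasFDerivAt (fun x => G (x, θ)) ((fderiv ℝ G (q, θ)).comp (inl ℝ (ℝ × ℝ) ℝ)) q :=
  h.hasFDerivAt.comp q (hasFDerivAt_prodMk_left q θ)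

lemma clm_split (L : ((ℝ × ℝ) × ℝ) →L[ℝ] E) (v : ℝ × ℝ) (t : ℝ) :
    L (v, t) = L (v, 0) + t • L (((0,0) : ℝ × ℝ), (1:ℝ)) := by
  rw [← L.map_smul, ← L.map_add]
  congr 1
  simp [Prod.ext_iff]

end helpers

/-- **The control curvature.** Under assumptions (S1)–(S3), the double Lie bracket
`[H,[V,H]]` is vertical; more precisely `[H,[V,H]] = κ • V` with
`κ := L_{H′}c − L_H c′`. -/
theorem double_bracket_eq_curvature_smul_vertical
    (U : Set (ℝ × ℝ)) (hU : IsOpen U) (hUconn : IsConnected U)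
    (ε : ℝ) (hε : ε = 1 ∨ ε = -1)
    (f : ℝ × ℝ → ℝ → ℝ × ℝ) (b c : ℝ × ℝ → ℝ → ℝ)
    (hf : ContDiffOn ℝ (⊤ : ℕ∞) (fun p : (ℝ × ℝ) × ℝ => f p.1 p.2) (U ×ˢ univ))
    (hb : ContDiffOn ℝ (⊤ : ℕ∞) (fun p : (ℝ × ℝ) × ℝ => b p.1 p.2) (U ×ˢ univ))
    (hc : ContDiffOn ℝ (⊤ : ℕ∞) (fun p : (ℝ × ℝ) × ℝ => c p.1 p.2) (U ×ˢ univ))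
    (hS1 : ∀ q ∈ U, ∀ θ : ℝ, LinearIndependent ℝ ![f q θ, deriv (f q) θ])
    (hS2 : ∀ q ∈ U, ∀ θ : ℝ,
      deriv (deriv (f q)) θ = -(ε • f q θ) - b q θ • deriv (f q) θ)
    (hS3 : ∀ θ : ℝ, ∀ q ∈ U,
      lieBracket2 (fun p => f p θ) (fun p => deriv (f p) θ) q
        = -((ε * c q θ) • f q θ) - (deriv (c q) θ + b q θ * c q θ) • deriv (f q) θ)
    :
    ∀ p ∈ U ×ˢ (univ : Set ℝ),
      lieBracket3 (Ham f c) (lieBracket3 Vert (Ham f c)) p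
        = controlCurvature f c p.1 p.2 • Vert p := by
  have hs : IsOpen (U ×ˢ (univ : Set ℝ)) := hU.prod isOpen_univ
  set e3 : (ℝ × ℝ) × ℝ := (((0,0) : ℝ × ℝ), (1:ℝ)) with he3
  set F : (ℝ × ℝ) × ℝ → ℝ × ℝ := fun p => f p.1 p.2 with hFdef
  set C : (ℝ × ℝ) × ℝ → ℝ := fun p => c p.1 p.2 with hCdef
  set F2 : (ℝ × ℝ) × ℝ → ℝ × ℝ := fun x => fderiv ℝ F x e3 with hF2def
  set C2 : (ℝ × ℝ) × ℝ → ℝ := fun x => fderiv ℝ C x e3 with hC2def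
  have hFdiff : ∀ x ∈ U ×ˢ (univ : Set ℝ), DifferentiableAt ℝ F x := fun x hx =>
    (hf.contDiffAt (hs.mem_nhds hx)).differentiableAt (by simp)
  have hCdiff : ∀ x ∈ U ×ˢ (univ : Set ℝ), DifferentiableAt ℝ C x := fun x hx =>
    (hc.contDiffAt (hs.mem_nhds hx)).differentiableAt (by simp)
  have hF2smooth : ContDiffOn ℝ 1 F2 (U ×ˢ (univ : Set ℝ)) :=
    (hf.fderiv_of_isOpen hs (by exact WithTop.coe_le_coe.mpr le_top)).clm_apply contDiffOn_const
  have hC2smooth : ContDiffOn ℝ 1 C2 (U ×ˢ (univ : Set ℝ)) :=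
    (hc.fderiv_of_isOpen hs (by exact WithTop.coe_le_coe.mpr le_top)).clm_apply contDiffOn_const
  have hF2diff : ∀ x ∈ U ×ˢ (univ : Set ℝ), DifferentiableAt ℝ F2 x := fun x hx =>
    (hF2smooth.contDiffAt (hs.mem_nhds hx)).differentiableAt one_ne_zero
  have hC2diff : ∀ x ∈ U ×ˢ (univ : Set ℝ), DifferentiableAt ℝ C2 x := fun x hx =>
    (hC2smooth.contDiffAt (hs.mem_nhds hx)).differentiableAt one_ne_zero
  have hmem : ∀ q ∈ U, ∀ t : ℝ, ((q, t) : (ℝ × ℝ) × ℝ) ∈ U ×ˢ (univ : Set ℝ) := by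
    intro q hq t; exact ⟨hq, mem_univ t⟩
  -- (k1)  deriv (f q) t = F2 (q, t)
  have k1 : ∀ q ∈ U, ∀ t : ℝ, deriv (f q) t = F2 (q, t) := by
    intro q hq t
    exact (slice_vert F q t (hFdiff _ (hmem q hq t))).deriv
  have k2 : ∀ q ∈ U, ∀ t : ℝ, deriv (c q) t = C2 (q, t) := by
    intro q hq t
    exact (slice_vert C q t (hCdiff _ (hmem q hq t))).deriv
  -- bracket [V, H] on s
  have k11 : ∀ x ∈ U ×ˢ (univ : Set ℝ),
      lieBracket3 Vert (Ham f c) x = (F2 x, -(C2 x)) := by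
    intro x hx
    have hH : HasFDerivAt (Ham f c) ((fderiv ℝ F x).prod (-(fderiv ℝ C x))) x :=
      HasFDerivAt.prodMk (hFdiff x hx).hasFDerivAt (hCdiff x hx).hasFDerivAt.neg
    have hV : fderiv ℝ Vert x = 0 := fderiv_const_apply _
    simp only [lieBracket3, Vert, hH.fderiv, hV]
    simp [F2, C2, he3, ← Prod.mk_zero_zero]
  intro p hp
  obtain ⟨q, θ⟩ := p
  have hq : q ∈ U := hp.1
  have hpmem : ((q, θ) : (ℝ × ℝ) × ℝ) ∈ U ×ˢ (univ : Set ℝ) := hp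
  -- abbreviations at the point
  set L : ((ℝ × ℝ) × ℝ) →L[ℝ] ℝ × ℝ := fderiv ℝ F (q, θ) with hL
  set M : ((ℝ × ℝ) × ℝ) →L[ℝ] ℝ := fderiv ℝ C (q, θ) with hM
  set L2 : ((ℝ × ℝ) × ℝ) →L[ℝ] ℝ × ℝ := fderiv ℝ F2 (q, θ) with hL2
  set M2 : ((ℝ × ℝ) × ℝ) →L[ℝ] ℝ := fderiv ℝ C2 (q, θ) with hM2
  -- pointwise values
  have kf' : deriv (f q) θ = L e3 := k1 q hq θ
  have kc' : deriv (c q) θ = M e3 := k2 q hq θ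
  -- second derivatives
  have kf'' : deriv (deriv (f q)) θ = L2 e3 := by
    have : deriv (f q) = fun t => F2 (q, t) := funext fun t => k1 q hq t
    rw [this]
    exact (slice_vert F2 q θ (hF2diff _ hpmem)).deriv
  have kc'' : deriv (deriv (c q)) θ = M2 e3 := by
    have : deriv (c q) = fun t => C2 (q, t) := funext fun t => k2 q hq t
    rw [this]
    exact (slice_vert C2 q θ (hC2diff _ hpmem)).deriv
  -- horizontal derivatives
  have k5 : fderiv ℝ (fun x => f x θ) q = L.comp (inl ℝ (ℝ × ℝ) ℝ) :=
    (slice_horiz F q θ (hFdiff _ hpmem)).fderiv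
  have k6 : fderiv ℝ (fun x => c x θ) q = M.comp (inl ℝ (ℝ × ℝ) ℝ) :=
    (slice_horiz C q θ (hCdiff _ hpmem)).fderiv
  have k7 : fderiv ℝ (fun x => deriv (f x) θ) q = L2.comp (inl ℝ (ℝ × ℝ) ℝ) := by
    have hev : (fun x => deriv (f x) θ) =ᶠ[nhds q] (fun x => F2 (x, θ)) := by
      filter_upwards [hU.mem_nhds hq] with x hx using k1 x hx θ
    rw [hev.fderiv_eq]
    exact (slice_horiz F2 q θ (hF2diff _ hpmem)).fderiv
  have k8 : fderiv ℝ (fun x => deriv (c x) θ) q = M2.comp (inl ℝ (ℝ × ℝ) ℝ) := by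
    have hev : (fun x => deriv (c x) θ) =ᶠ[nhds q] (fun x => C2 (x, θ)) := by
      filter_upwards [hU.mem_nhds hq] with x hx using k2 x hx θ
    rw [hev.fderiv_eq]
    exact (slice_horiz C2 q θ (hC2diff _ hpmem)).fderiv
  -- fderiv of the inner bracket at p
  have k12 : fderiv ℝ (lieBracket3 Vert (Ham f c)) (q, θ) = L2.prod (-M2) := by
    have hev : lieBracket3 Vert (Ham f c) =ᶠ[nhds ((q, θ) : (ℝ × ℝ) × ℝ)]
        (fun x => (F2 x, -(C2 x))) := by
      filter_upwards [hs.mem_nhds hpmem] with x hx using k11 x hx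
    rw [hev.fderiv_eq]
    exact (HasFDerivAt.prodMk (hF2diff _ hpmem).hasFDerivAt (hC2diff _ hpmem).hasFDerivAt.neg).fderiv
  -- fderiv of Ham at p
  have kHam : fderiv ℝ (Ham f c) (q, θ) = L.prod (-M) :=
    (HasFDerivAt.prodMk (hFdiff _ hpmem).hasFDerivAt (hCdiff _ hpmem).hasFDerivAt.neg).fderiv
  -- assemble
  have hBRp : lieBracket3 Vert (Ham f c) (q, θ) = (deriv (f q) θ, -(deriv (c q) θ)) := by
    rw [k11 _ hpmem, k1 q hq θ, k2 q hq θ]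
  show lieBracket3 (Ham f c) (lieBracket3 Vert (Ham f c)) (q, θ)
      = controlCurvature f c q θ • Vert (q, θ)
  rw [lieBracket3, k12, hBRp, kHam]
  have hHamp : Ham f c (q, θ) = (f q θ, -(c q θ)) := rfl
  rw [hHamp]
  have hVp : Vert ((q, θ) : (ℝ × ℝ) × ℝ) = (((0,0) : ℝ × ℝ), (1:ℝ)) := rfl
  rw [hVp]
  -- now pure computation
  have hS3' := hS3 θ q hq
  rw [lieBracket2, k5, k7] at hS3'
  simp only [ContinuousLinearMap.comp_apply, ContinuousLinearMap.inl_apply] at hS3'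
  have hS2' := hS2 q hq θ
  rw [kf''] at hS2'
  -- goal: (L2.prod (-M2)) (f q θ, -(c q θ)) - (L.prod (-M)) (deriv (f q) θ, -(deriv (c q) θ))
  --     = controlCurvature f c q θ • ((0,0), 1)
  simp only [ContinuousLinearMap.prod_apply, ContinuousLinearMap.neg_apply,
    controlCurvature, LH, LH', Prod.smul_mk, Prod.mk_sub_mk]
  rw [clm_split L2 (f q θ) (-(c q θ)), clm_split L (deriv (f q) θ) (-(deriv (c q) θ)),
    clm_split M2 (f q θ) (-(c q θ)), clm_split M (deriv (f q) θ) (-(deriv (c q) θ))]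
  rw [← he3]
  rw [Prod.mk.injEq]
  refine ⟨?_, ?_⟩
  · -- first component vanishes
    have h3 : L2 (f q θ, 0) = L (deriv (f q) θ, 0)
        + (-((ε * c q θ) • f q θ) - (deriv (c q) θ + b q θ * c q θ) • deriv (f q) θ) := by
      rw [← hS3']; abel
    rw [h3, hS2', ← kf']
    simp only [smul_zero, Prod.mk_zero_zero]
    module
  · -- second component equals the control curvature
    have keta : deriv (fun t => deriv (c q) t) θ = M2 e3 := kc''
    rw [k6, k8, keta, ← kc']
    simp only [ContinuousLinearMap.comp_apply, ContinuousLinearMap.inl_apply,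
      smul_eq_mul]
    ring
end

section
/- Under assumptions (S1)–(S3), the vector fields H and V on U × ℝ ⊆ ℝ³ satisfy the identity [V,[H,V]] = ε H + b·[V,H] + (L_H b)·V. -/
open Set

section AuxVDB

open Filter

variable {E : Type*} [NormedAddCommGroup E] [NormedSpace ℝ E]

noncomputable def vd (G : (ℝ × ℝ) × ℝ → E) : (ℝ × ℝ) × ℝ → E :=
  fun p => fderiv ℝ G p ((0, 0), 1)

lemma deriv_vertical {G : (ℝ × ℝ) × ℝ → E} {p : (ℝ × ℝ) × ℝ}
    (h : DifferentiableAt ℝ G p) :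
    deriv (fun t => G (p.1, t)) p.2 = vd G p := by
  have hline : HasDerivAt (fun t : ℝ => ((p.1, t) : (ℝ × ℝ) × ℝ))
      (((0, 0) : ℝ × ℝ), (1 : ℝ)) p.2 :=
    HasDerivAt.prodMk (hasDerivAt_const p.2 p.1) (hasDerivAt_id p.2)
  exact (h.hasFDerivAt.comp_hasDerivAt p.2 hline).deriv

lemma fderiv_horizontal {G : (ℝ × ℝ) × ℝ → E} {p : (ℝ × ℝ) × ℝ}
    (h : DifferentiableAt ℝ G p) (v : ℝ × ℝ) :
    fderiv ℝ (fun x : ℝ × ℝ => G (x, p.2)) p.1 v = fderiv ℝ G p (v, 0) := by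
  have hincl : HasFDerivAt (fun x : ℝ × ℝ => ((x, p.2) : (ℝ × ℝ) × ℝ))
      (ContinuousLinearMap.inl ℝ (ℝ × ℝ) ℝ) p.1 := hasFDerivAt_prodMk_left p.1 p.2
  have hcomp : HasFDerivAt (fun x : ℝ × ℝ => G (x, p.2))
      ((fderiv ℝ G p).comp (ContinuousLinearMap.inl ℝ (ℝ × ℝ) ℝ)) p.1 :=
    h.hasFDerivAt.comp p.1 hincl
  rw [hcomp.fderiv]
  rfl

lemma vd_contDiffAt {G : (ℝ × ℝ) × ℝ → E} {p : (ℝ × ℝ) × ℝ}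
    (h : ContDiffAt ℝ (⊤ : ℕ∞) G p) : ContDiffAt ℝ (⊤ : ℕ∞) (vd G) p :=
  (h.fderiv_right (by simp)).clm_apply contDiffAt_const

lemma fderiv_vd {G : (ℝ × ℝ) × ℝ → E} {p : (ℝ × ℝ) × ℝ}
    (h : ContDiffAt ℝ (⊤ : ℕ∞) G p) (v : (ℝ × ℝ) × ℝ) :
    fderiv ℝ (vd G) p v = fderiv ℝ (fderiv ℝ G) p v ((0, 0), 1) := by
  have h1 : DifferentiableAt ℝ (fderiv ℝ G) p :=
    (h.fderiv_right (m := (⊤ : ℕ∞)) (by simp)).differentiableAt (by simp)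
  have : fderiv ℝ (vd G) p = fderiv ℝ (fun q => fderiv ℝ G q ((0, 0), 1)) p := rfl
  rw [this, fderiv_clm_apply h1 (differentiableAt_const _)]
  simp

lemma fderiv_vd_symm {G : (ℝ × ℝ) × ℝ → E} {p : (ℝ × ℝ) × ℝ}
    (h : ContDiffAt ℝ (⊤ : ℕ∞) G p) (v : (ℝ × ℝ) × ℝ) :
    fderiv ℝ (fderiv ℝ G) p ((0, 0), 1) v = fderiv ℝ (vd G) p v := by
  rw [fderiv_vd h v]
  exact (h.isSymmSndFDerivAt (by rw [minSmoothness_of_isRCLikeNormedField]; exact WithTop.coe_le_coe.mpr le_top) _ _).symm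

lemma fderiv_Phi {F : (ℝ × ℝ) × ℝ → ℝ × ℝ} {p : (ℝ × ℝ) × ℝ}
    (hF : ContDiffAt ℝ (⊤ : ℕ∞) F p) :
    fderiv ℝ (fun x => fderiv ℝ (vd F) x (F x, 0) - fderiv ℝ F x (vd F x, 0)) p ((0, 0), 1)
      = fderiv ℝ (vd (vd F)) p (F p, 0) - fderiv ℝ F p (vd (vd F) p, 0) := by
  have hF1 : ContDiffAt ℝ (⊤ : ℕ∞) (vd F) p := vd_contDiffAt hF
  have dF : DifferentiableAt ℝ F p := hF.differentiableAt (by simp)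
  have dF1 : DifferentiableAt ℝ (vd F) p := hF1.differentiableAt (by simp)
  have dDF : DifferentiableAt ℝ (fderiv ℝ F) p :=
    (hF.fderiv_right (m := (⊤ : ℕ∞)) (by simp)).differentiableAt (by simp)
  have dDF1 : DifferentiableAt ℝ (fderiv ℝ (vd F)) p :=
    (hF1.fderiv_right (m := (⊤ : ℕ∞)) (by simp)).differentiableAt (by simp)
  have hu1 : HasFDerivAt (fun x => ((F x, (0 : ℝ)) : (ℝ × ℝ) × ℝ))
      ((fderiv ℝ F p).prod 0) p :=
    HasFDerivAt.prodMk dF.hasFDerivAt (hasFDerivAt_const 0 p)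
  have hu2 : HasFDerivAt (fun x => ((vd F x, (0 : ℝ)) : (ℝ × ℝ) × ℝ))
      ((fderiv ℝ (vd F) p).prod 0) p :=
    HasFDerivAt.prodMk dF1.hasFDerivAt (hasFDerivAt_const 0 p)
  have h1 : HasFDerivAt (fun x => fderiv ℝ (vd F) x (F x, 0))
      ((fderiv ℝ (vd F) p).comp ((fderiv ℝ F p).prod 0)
        + (fderiv ℝ (fderiv ℝ (vd F)) p).flip (F p, 0)) p :=
    dDF1.hasFDerivAt.clm_apply hu1
  have h2 : HasFDerivAt (fun x => fderiv ℝ F x (vd F x, 0))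
      ((fderiv ℝ F p).comp ((fderiv ℝ (vd F) p).prod 0)
        + (fderiv ℝ (fderiv ℝ F) p).flip (vd F p, 0)) p :=
    dDF.hasFDerivAt.clm_apply hu2
  rw [(h1.fun_sub h2).fderiv]
  simp only [ContinuousLinearMap.coe_sub', Pi.sub_apply, ContinuousLinearMap.add_apply,
    ContinuousLinearMap.coe_comp', Function.comp_apply, ContinuousLinearMap.flip_apply,
    ContinuousLinearMap.prod_apply, ContinuousLinearMap.zero_apply]
  rw [fderiv_vd_symm hF1 (F p, 0), fderiv_vd_symm hF (vd F p, 0)]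
  rw [show fderiv ℝ F p ((0, 0), 1) = vd F p from rfl,
    show fderiv ℝ (vd F) p ((0, 0), 1) = vd (vd F) p from rfl]
  abel

end AuxVDB

/-- Under assumptions (S1)–(S3), the vector fields `H` and `V` on `U × ℝ ⊆ ℝ³` satisfy
`[V,[H,V]] = ε H + b·[V,H] + (L_H b)·V`. -/
theorem vertical_double_bracket_identity
    (U : Set (ℝ × ℝ)) (hU : IsOpen U) (hUconn : IsConnected U)
    (ε : ℝ) (hε : ε = 1 ∨ ε = -1)
    (f : ℝ × ℝ → ℝ → ℝ × ℝ) (b c : ℝ × ℝ → ℝ → ℝ)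
    (hf : ContDiffOn ℝ (⊤ : ℕ∞) (fun p : (ℝ × ℝ) × ℝ => f p.1 p.2) (U ×ˢ univ))
    (hb : ContDiffOn ℝ (⊤ : ℕ∞) (fun p : (ℝ × ℝ) × ℝ => b p.1 p.2) (U ×ˢ univ))
    (hc : ContDiffOn ℝ (⊤ : ℕ∞) (fun p : (ℝ × ℝ) × ℝ => c p.1 p.2) (U ×ˢ univ))
    (hS1 : ∀ q ∈ U, ∀ θ : ℝ, LinearIndependent ℝ ![f q θ, deriv (f q) θ])
    (hS2 : ∀ q ∈ U, ∀ θ : ℝ,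
      deriv (deriv (f q)) θ = -(ε • f q θ) - b q θ • deriv (f q) θ)
    (hS3 : ∀ θ : ℝ, ∀ q ∈ U,
      lieBracket2 (fun p => f p θ) (fun p => deriv (f p) θ) q
        = -((ε * c q θ) • f q θ) - (deriv (c q) θ + b q θ * c q θ) • deriv (f q) θ)
    :
    ∀ p ∈ U ×ˢ (univ : Set ℝ),
      lieBracket3 Vert (lieBracket3 (Ham f c) Vert) p
        = ε • Ham f c p + b p.1 p.2 • lieBracket3 Vert (Ham f c) p
          + LH f c b p.1 p.2 • Vert p := by
  intro p₀ hp₀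
  have hsOpen : IsOpen (U ×ˢ (univ : Set ℝ)) := hU.prod isOpen_univ
  -- smoothness / differentiability
  have hFc : ∀ p ∈ U ×ˢ (univ : Set ℝ),
      ContDiffAt ℝ (⊤ : ℕ∞) (fun p : (ℝ × ℝ) × ℝ => f p.1 p.2) p :=
    fun p hp => hf.contDiffAt (hsOpen.mem_nhds hp)
  have hBc : ∀ p ∈ U ×ˢ (univ : Set ℝ),
      ContDiffAt ℝ (⊤ : ℕ∞) (fun p : (ℝ × ℝ) × ℝ => b p.1 p.2) p :=
    fun p hp => hb.contDiffAt (hsOpen.mem_nhds hp)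
  have hCc : ∀ p ∈ U ×ˢ (univ : Set ℝ),
      ContDiffAt ℝ (⊤ : ℕ∞) (fun p : (ℝ × ℝ) × ℝ => c p.1 p.2) p :=
    fun p hp => hc.contDiffAt (hsOpen.mem_nhds hp)
  have dF : ∀ p ∈ U ×ˢ (univ : Set ℝ),
      DifferentiableAt ℝ (fun p : (ℝ × ℝ) × ℝ => f p.1 p.2) p :=
    fun p hp => (hFc p hp).differentiableAt (by simp)
  have dB : ∀ p ∈ U ×ˢ (univ : Set ℝ),
      DifferentiableAt ℝ (fun p : (ℝ × ℝ) × ℝ => b p.1 p.2) p :=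
    fun p hp => (hBc p hp).differentiableAt (by simp)
  have dC : ∀ p ∈ U ×ˢ (univ : Set ℝ),
      DifferentiableAt ℝ (fun p : (ℝ × ℝ) × ℝ => c p.1 p.2) p :=
    fun p hp => (hCc p hp).differentiableAt (by simp)
  have dF1 : ∀ p ∈ U ×ˢ (univ : Set ℝ),
      DifferentiableAt ℝ (vd (fun p : (ℝ × ℝ) × ℝ => f p.1 p.2)) p :=
    fun p hp => (vd_contDiffAt (hFc p hp)).differentiableAt (by simp)
  have dC1 : ∀ p ∈ U ×ˢ (univ : Set ℝ),
      DifferentiableAt ℝ (vd (fun p : (ℝ × ℝ) × ℝ => c p.1 p.2)) p :=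
    fun p hp => (vd_contDiffAt (hCc p hp)).differentiableAt (by simp)
  -- vertical derivatives as `deriv`s
  have hv : ∀ p ∈ U ×ˢ (univ : Set ℝ),
      vd (fun p : (ℝ × ℝ) × ℝ => f p.1 p.2) p = deriv (f p.1) p.2 :=
    fun p hp => (deriv_vertical (dF p hp)).symm
  have hvC : ∀ p ∈ U ×ˢ (univ : Set ℝ),
      vd (fun p : (ℝ × ℝ) × ℝ => c p.1 p.2) p = deriv (c p.1) p.2 :=
    fun p hp => (deriv_vertical (dC p hp)).symm
  have hvB : vd (fun p : (ℝ × ℝ) × ℝ => b p.1 p.2) p₀ = deriv (b p₀.1) p₀.2 :=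
    (deriv_vertical (dB p₀ hp₀)).symm
  have hvv : ∀ p ∈ U ×ˢ (univ : Set ℝ),
      vd (vd (fun p : (ℝ × ℝ) × ℝ => f p.1 p.2)) p = deriv (deriv (f p.1)) p.2 := by
    intro p hp
    have h1 : deriv (f p.1) = fun t => vd (fun p : (ℝ × ℝ) × ℝ => f p.1 p.2) (p.1, t) :=
      funext fun t => (hv (p.1, t) ⟨hp.1, trivial⟩).symm
    rw [h1]
    exact (deriv_vertical (dF1 p hp)).symm
  -- S2 in terms of `vd`
  have hS2s : ∀ p ∈ U ×ˢ (univ : Set ℝ),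
      vd (vd (fun p : (ℝ × ℝ) × ℝ => f p.1 p.2)) p
        = -(ε • f p.1 p.2) - b p.1 p.2 • vd (fun p : (ℝ × ℝ) × ℝ => f p.1 p.2) p := by
    intro p hp
    rw [hvv p hp, hv p hp]
    exact hS2 p.1 hp.1 p.2
  -- first bracket [H,V]
  have hbr1 : ∀ p ∈ U ×ˢ (univ : Set ℝ),
      lieBracket3 (Ham f c) Vert p
        = (-(vd (fun p : (ℝ × ℝ) × ℝ => f p.1 p.2) p),
            vd (fun p : (ℝ × ℝ) × ℝ => c p.1 p.2) p) := by
    intro p hp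
    have hHam : HasFDerivAt (Ham f c)
        ((fderiv ℝ (fun p : (ℝ × ℝ) × ℝ => f p.1 p.2) p).prod
          (-(fderiv ℝ (fun p : (ℝ × ℝ) × ℝ => c p.1 p.2) p))) p :=
      HasFDerivAt.prodMk (dF p hp).hasFDerivAt ((dC p hp).hasFDerivAt.fun_neg)
    have h0 : fderiv ℝ Vert p = 0 := fderiv_const_apply _
    show fderiv ℝ Vert p (Ham f c p) - fderiv ℝ (Ham f c) p (Vert p) = _
    rw [h0, hHam.fderiv]
    simp [Vert, vd]
  have hbr2 : lieBracket3 Vert (Ham f c) p₀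
      = (vd (fun p : (ℝ × ℝ) × ℝ => f p.1 p.2) p₀,
          -(vd (fun p : (ℝ × ℝ) × ℝ => c p.1 p.2) p₀)) := by
    have hHam : HasFDerivAt (Ham f c)
        ((fderiv ℝ (fun p : (ℝ × ℝ) × ℝ => f p.1 p.2) p₀).prod
          (-(fderiv ℝ (fun p : (ℝ × ℝ) × ℝ => c p.1 p.2) p₀))) p₀ :=
      HasFDerivAt.prodMk (dF p₀ hp₀).hasFDerivAt ((dC p₀ hp₀).hasFDerivAt.fun_neg)
    have h0 : fderiv ℝ Vert p₀ = 0 := fderiv_const_apply _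
    show fderiv ℝ (Ham f c) p₀ (Vert p₀) - fderiv ℝ Vert p₀ (Ham f c p₀) = _
    rw [h0, hHam.fderiv]
    simp [Vert, vd]
  have hev1 : lieBracket3 (Ham f c) Vert =ᶠ[nhds p₀]
      (fun p => ((-(vd (fun p : (ℝ × ℝ) × ℝ => f p.1 p.2) p),
        vd (fun p : (ℝ × ℝ) × ℝ => c p.1 p.2) p) : (ℝ × ℝ) × ℝ)) :=
    Filter.eventuallyEq_of_mem (hsOpen.mem_nhds hp₀) hbr1
  have hGder : HasFDerivAt (fun p => ((-(vd (fun p : (ℝ × ℝ) × ℝ => f p.1 p.2) p),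
        vd (fun p : (ℝ × ℝ) × ℝ => c p.1 p.2) p) : (ℝ × ℝ) × ℝ))
      ((-(fderiv ℝ (vd (fun p : (ℝ × ℝ) × ℝ => f p.1 p.2)) p₀)).prod
        (fderiv ℝ (vd (fun p : (ℝ × ℝ) × ℝ => c p.1 p.2)) p₀)) p₀ :=
    HasFDerivAt.prodMk ((dF1 p₀ hp₀).hasFDerivAt.fun_neg) (dC1 p₀ hp₀).hasFDerivAt
  have hLHS : lieBracket3 Vert (lieBracket3 (Ham f c) Vert) p₀
      = (-(vd (vd (fun p : (ℝ × ℝ) × ℝ => f p.1 p.2)) p₀),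
          vd (vd (fun p : (ℝ × ℝ) × ℝ => c p.1 p.2)) p₀) := by
    have h0 : fderiv ℝ Vert p₀ = 0 := fderiv_const_apply _
    show fderiv ℝ (lieBracket3 (Ham f c) Vert) p₀ (Vert p₀)
        - fderiv ℝ Vert p₀ (lieBracket3 (Ham f c) Vert p₀) = _
    rw [h0, hev1.fderiv_eq, hGder.fderiv]
    simp [Vert, vd]
  -- translation of LH
  have hLHb : LH f c b p₀.1 p₀.2
      = fderiv ℝ (fun p : (ℝ × ℝ) × ℝ => b p.1 p.2) p₀ (f p₀.1 p₀.2, 0)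
        - c p₀.1 p₀.2 * vd (fun p : (ℝ × ℝ) × ℝ => b p.1 p.2) p₀ := by
    have h1 : fderiv ℝ (fun x : ℝ × ℝ => b x p₀.2) p₀.1 (f p₀.1 p₀.2)
        = fderiv ℝ (fun p : (ℝ × ℝ) × ℝ => b p.1 p.2) p₀ (f p₀.1 p₀.2, 0) :=
      fderiv_horizontal (dB p₀ hp₀) _
    have h2 : deriv (b p₀.1) p₀.2 = vd (fun p : (ℝ × ℝ) × ℝ => b p.1 p.2) p₀ :=
      deriv_vertical (dB p₀ hp₀)
    show fderiv ℝ (fun x : ℝ × ℝ => b x p₀.2) p₀.1 (f p₀.1 p₀.2)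
        - c p₀.1 p₀.2 * deriv (b p₀.1) p₀.2 = _
    rw [h1, h2]
  -- S3 in terms of vd :  Φ = Ψ on U ×ˢ univ
  have hPhiPsi : ∀ p ∈ U ×ˢ (univ : Set ℝ),
      fderiv ℝ (vd (fun p : (ℝ × ℝ) × ℝ => f p.1 p.2)) p (f p.1 p.2, 0)
        - fderiv ℝ (fun p : (ℝ × ℝ) × ℝ => f p.1 p.2) p (vd (fun p : (ℝ × ℝ) × ℝ => f p.1 p.2) p, 0)
      = -((ε * c p.1 p.2) • f p.1 p.2)
        - (vd (fun p : (ℝ × ℝ) × ℝ => c p.1 p.2) p + b p.1 p.2 * c p.1 p.2) • vd (fun p : (ℝ × ℝ) × ℝ => f p.1 p.2) p := by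
    intro p hp
    have h3 := hS3 p.2 p.1 hp.1
    have hev : (fun x : ℝ × ℝ => deriv (f x) p.2)
        =ᶠ[nhds p.1] (fun x => vd (fun p : (ℝ × ℝ) × ℝ => f p.1 p.2) (x, p.2)) := by
      filter_upwards [hU.mem_nhds hp.1] with x hx
      exact (hv (x, p.2) ⟨hx, trivial⟩).symm
    have h4 : fderiv ℝ (fun x : ℝ × ℝ => deriv (f x) p.2) p.1
        = fderiv ℝ (fun x : ℝ × ℝ => vd (fun p : (ℝ × ℝ) × ℝ => f p.1 p.2) (x, p.2)) p.1 :=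
      hev.fderiv_eq
    have h5 : fderiv ℝ (fun x : ℝ × ℝ => vd (fun p : (ℝ × ℝ) × ℝ => f p.1 p.2) (x, p.2)) p.1 (f p.1 p.2)
        = fderiv ℝ (vd (fun p : (ℝ × ℝ) × ℝ => f p.1 p.2)) p (f p.1 p.2, 0) :=
      fderiv_horizontal (dF1 p hp) _
    have h6 : fderiv ℝ (fun x : ℝ × ℝ => f x p.2) p.1 (deriv (f p.1) p.2)
        = fderiv ℝ (fun p : (ℝ × ℝ) × ℝ => f p.1 p.2) p (deriv (f p.1) p.2, 0) :=
      fderiv_horizontal (dF p hp) _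
    simp only [lieBracket2] at h3
    rw [h4, h5, h6, ← hv p hp, ← hvC p hp] at h3
    exact h3
  -- equality of the vertical derivatives of the two sides
  have hd : fderiv ℝ (fun p => fderiv ℝ (vd (fun p : (ℝ × ℝ) × ℝ => f p.1 p.2)) p (f p.1 p.2, 0)
        - fderiv ℝ (fun p : (ℝ × ℝ) × ℝ => f p.1 p.2) p (vd (fun p : (ℝ × ℝ) × ℝ => f p.1 p.2) p, 0)) p₀ ((0, 0), 1)
      = fderiv ℝ (fun p => -((ε * c p.1 p.2) • f p.1 p.2)
        - (vd (fun p : (ℝ × ℝ) × ℝ => c p.1 p.2) p + b p.1 p.2 * c p.1 p.2) • vd (fun p : (ℝ × ℝ) × ℝ => f p.1 p.2) p) p₀ ((0, 0), 1) := by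
    have hev2 : (fun p => fderiv ℝ (vd (fun p : (ℝ × ℝ) × ℝ => f p.1 p.2)) p (f p.1 p.2, 0)
        - fderiv ℝ (fun p : (ℝ × ℝ) × ℝ => f p.1 p.2) p (vd (fun p : (ℝ × ℝ) × ℝ => f p.1 p.2) p, 0))
        =ᶠ[nhds p₀] (fun p => -((ε * c p.1 p.2) • f p.1 p.2)
        - (vd (fun p : (ℝ × ℝ) × ℝ => c p.1 p.2) p + b p.1 p.2 * c p.1 p.2) • vd (fun p : (ℝ × ℝ) × ℝ => f p.1 p.2) p) :=
      Filter.eventuallyEq_of_mem (hsOpen.mem_nhds hp₀) hPhiPsi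
    rw [hev2.fderiv_eq]
  -- value of the Φ side
  have hPhiVal : fderiv ℝ (fun p => fderiv ℝ (vd (fun p : (ℝ × ℝ) × ℝ => f p.1 p.2)) p (f p.1 p.2, 0)
        - fderiv ℝ (fun p : (ℝ × ℝ) × ℝ => f p.1 p.2) p (vd (fun p : (ℝ × ℝ) × ℝ => f p.1 p.2) p, 0)) p₀ ((0, 0), 1)
      = fderiv ℝ (vd (vd (fun p : (ℝ × ℝ) × ℝ => f p.1 p.2))) p₀ (f p₀.1 p₀.2, 0)
        - fderiv ℝ (fun p : (ℝ × ℝ) × ℝ => f p.1 p.2) p₀ (vd (vd (fun p : (ℝ × ℝ) × ℝ => f p.1 p.2)) p₀, 0) :=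
    fderiv_Phi (hFc p₀ hp₀)
  -- derivative of S2 in the direction (f, 0)
  have hS2d : fderiv ℝ (vd (vd (fun p : (ℝ × ℝ) × ℝ => f p.1 p.2))) p₀ (f p₀.1 p₀.2, 0)
      = -(ε • fderiv ℝ (fun p : (ℝ × ℝ) × ℝ => f p.1 p.2) p₀ (f p₀.1 p₀.2, 0))
        - (b p₀.1 p₀.2 • fderiv ℝ (vd (fun p : (ℝ × ℝ) × ℝ => f p.1 p.2)) p₀ (f p₀.1 p₀.2, 0)
           + fderiv ℝ (fun p : (ℝ × ℝ) × ℝ => b p.1 p.2) p₀ (f p₀.1 p₀.2, 0) • vd (fun p : (ℝ × ℝ) × ℝ => f p.1 p.2) p₀) := by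
    have hev3 : vd (vd (fun p : (ℝ × ℝ) × ℝ => f p.1 p.2))
        =ᶠ[nhds p₀] (fun p => -(ε • f p.1 p.2) - b p.1 p.2 • vd (fun p : (ℝ × ℝ) × ℝ => f p.1 p.2) p) :=
      Filter.eventuallyEq_of_mem (hsOpen.mem_nhds hp₀) hS2s
    have hder : HasFDerivAt (fun p => -(ε • f p.1 p.2) - b p.1 p.2 • vd (fun p : (ℝ × ℝ) × ℝ => f p.1 p.2) p)
        (-(ε • fderiv ℝ (fun p : (ℝ × ℝ) × ℝ => f p.1 p.2) p₀)
          - (b p₀.1 p₀.2 • fderiv ℝ (vd (fun p : (ℝ × ℝ) × ℝ => f p.1 p.2)) p₀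
             + (fderiv ℝ (fun p : (ℝ × ℝ) × ℝ => b p.1 p.2) p₀).smulRight (vd (fun p : (ℝ × ℝ) × ℝ => f p.1 p.2) p₀))) p₀ :=
      (((dF p₀ hp₀).hasFDerivAt.const_smul ε).neg).sub
        ((dB p₀ hp₀).hasFDerivAt.smul (dF1 p₀ hp₀).hasFDerivAt)
    rw [hev3.fderiv_eq, hder.fderiv]
    simp only [ContinuousLinearMap.coe_sub', Pi.sub_apply, ContinuousLinearMap.neg_apply,
      ContinuousLinearMap.add_apply, ContinuousLinearMap.coe_smul', Pi.smul_apply,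
      ContinuousLinearMap.smulRight_apply]
  -- value of the Ψ side
  have hPsiVal : fderiv ℝ (fun p => -((ε * c p.1 p.2) • f p.1 p.2)
        - (vd (fun p : (ℝ × ℝ) × ℝ => c p.1 p.2) p + b p.1 p.2 * c p.1 p.2) • vd (fun p : (ℝ × ℝ) × ℝ => f p.1 p.2) p) p₀ ((0, 0), 1)
      = -((ε * c p₀.1 p₀.2) • vd (fun p : (ℝ × ℝ) × ℝ => f p.1 p.2) p₀ + (ε * vd (fun p : (ℝ × ℝ) × ℝ => c p.1 p.2) p₀) • f p₀.1 p₀.2)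
        - ((vd (fun p : (ℝ × ℝ) × ℝ => c p.1 p.2) p₀ + b p₀.1 p₀.2 * c p₀.1 p₀.2) • vd (vd (fun p : (ℝ × ℝ) × ℝ => f p.1 p.2)) p₀
           + (vd (vd (fun p : (ℝ × ℝ) × ℝ => c p.1 p.2)) p₀ + (b p₀.1 p₀.2 * vd (fun p : (ℝ × ℝ) × ℝ => c p.1 p.2) p₀
              + c p₀.1 p₀.2 * vd (fun p : (ℝ × ℝ) × ℝ => b p.1 p.2) p₀)) • vd (fun p : (ℝ × ℝ) × ℝ => f p.1 p.2) p₀) := by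
    have h1 : HasFDerivAt (fun p : (ℝ × ℝ) × ℝ => ε * c p.1 p.2)
        (ε • fderiv ℝ (fun p : (ℝ × ℝ) × ℝ => c p.1 p.2) p₀) p₀ :=
      (dC p₀ hp₀).hasFDerivAt.const_mul ε
    have h2 : HasFDerivAt (fun p : (ℝ × ℝ) × ℝ => (ε * c p.1 p.2) • f p.1 p.2)
        ((ε * c p₀.1 p₀.2) • fderiv ℝ (fun p : (ℝ × ℝ) × ℝ => f p.1 p.2) p₀
          + (ε • fderiv ℝ (fun p : (ℝ × ℝ) × ℝ => c p.1 p.2) p₀).smulRight (f p₀.1 p₀.2)) p₀ :=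
      h1.smul (dF p₀ hp₀).hasFDerivAt
    have h3 : HasFDerivAt (fun p : (ℝ × ℝ) × ℝ => vd (fun p : (ℝ × ℝ) × ℝ => c p.1 p.2) p + b p.1 p.2 * c p.1 p.2)
        (fderiv ℝ (vd (fun p : (ℝ × ℝ) × ℝ => c p.1 p.2)) p₀
          + (b p₀.1 p₀.2 • fderiv ℝ (fun p : (ℝ × ℝ) × ℝ => c p.1 p.2) p₀ + c p₀.1 p₀.2 • fderiv ℝ (fun p : (ℝ × ℝ) × ℝ => b p.1 p.2) p₀)) p₀ :=
      (dC1 p₀ hp₀).hasFDerivAt.add ((dB p₀ hp₀).hasFDerivAt.mul (dC p₀ hp₀).hasFDerivAt)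
    have h4 : HasFDerivAt (fun p : (ℝ × ℝ) × ℝ
          => (vd (fun p : (ℝ × ℝ) × ℝ => c p.1 p.2) p + b p.1 p.2 * c p.1 p.2) • vd (fun p : (ℝ × ℝ) × ℝ => f p.1 p.2) p)
        ((vd (fun p : (ℝ × ℝ) × ℝ => c p.1 p.2) p₀ + b p₀.1 p₀.2 * c p₀.1 p₀.2) • fderiv ℝ (vd (fun p : (ℝ × ℝ) × ℝ => f p.1 p.2)) p₀
          + (fderiv ℝ (vd (fun p : (ℝ × ℝ) × ℝ => c p.1 p.2)) p₀
             + (b p₀.1 p₀.2 • fderiv ℝ (fun p : (ℝ × ℝ) × ℝ => c p.1 p.2) p₀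
                + c p₀.1 p₀.2 • fderiv ℝ (fun p : (ℝ × ℝ) × ℝ => b p.1 p.2) p₀)).smulRight (vd (fun p : (ℝ × ℝ) × ℝ => f p.1 p.2) p₀)) p₀ :=
      h3.smul (dF1 p₀ hp₀).hasFDerivAt
    rw [(h2.fun_neg.fun_sub h4).fderiv]
    simp only [ContinuousLinearMap.coe_sub', Pi.sub_apply, ContinuousLinearMap.neg_apply,
      ContinuousLinearMap.add_apply, ContinuousLinearMap.coe_smul', Pi.smul_apply,
      ContinuousLinearMap.smulRight_apply, smul_eq_mul]
    simp only [vd]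
  have hS2p0 : vd (vd (fun p : (ℝ × ℝ) × ℝ => f p.1 p.2)) p₀
      = -(ε • f p₀.1 p₀.2) - b p₀.1 p₀.2 • vd (fun p : (ℝ × ℝ) × ℝ => f p.1 p.2) p₀ := hS2s p₀ hp₀
  have hlin2 : fderiv ℝ (fun p : (ℝ × ℝ) × ℝ => f p.1 p.2) p₀ (vd (vd (fun p : (ℝ × ℝ) × ℝ => f p.1 p.2)) p₀, 0)
      = -(ε • fderiv ℝ (fun p : (ℝ × ℝ) × ℝ => f p.1 p.2) p₀ (f p₀.1 p₀.2, 0))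
        - b p₀.1 p₀.2 • fderiv ℝ (fun p : (ℝ × ℝ) × ℝ => f p.1 p.2) p₀ (vd (fun p : (ℝ × ℝ) × ℝ => f p.1 p.2) p₀, 0) := by
    rw [hS2p0]
    have hx : ((-(ε • f p₀.1 p₀.2) - b p₀.1 p₀.2 • vd (fun p : (ℝ × ℝ) × ℝ => f p.1 p.2) p₀, (0 : ℝ)) : (ℝ × ℝ) × ℝ)
        = -(ε • ((f p₀.1 p₀.2, 0) : (ℝ × ℝ) × ℝ))
          - b p₀.1 p₀.2 • ((vd (fun p : (ℝ × ℝ) × ℝ => f p.1 p.2) p₀, 0) : (ℝ × ℝ) × ℝ) := by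
      simp [Prod.ext_iff]
    rw [hx, map_sub, map_neg, map_smul, map_smul]
  rw [hPhiVal, hS2d, hlin2, hPsiVal, hS2p0] at hd
  have hlinind : LinearIndependent ℝ ![f p₀.1 p₀.2, vd (fun p : (ℝ × ℝ) × ℝ => f p.1 p.2) p₀] := by
    rw [hv p₀ hp₀]
    exact hS1 p₀.1 hp₀.1 p₀.2
  have e2 := hPhiPsi p₀ hp₀
  have h0 : (0 : ℝ) • f p₀.1 p₀.2
      + (vd (vd (fun p : (ℝ × ℝ) × ℝ => c p.1 p.2)) p₀ + ε * c p₀.1 p₀.2 + b p₀.1 p₀.2 * vd (fun p : (ℝ × ℝ) × ℝ => c p.1 p.2) p₀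
         + vd (fun p : (ℝ × ℝ) × ℝ => b p.1 p.2) p₀ * c p₀.1 p₀.2 - fderiv ℝ (fun p : (ℝ × ℝ) × ℝ => b p.1 p.2) p₀ (f p₀.1 p₀.2, 0)) • vd (fun p : (ℝ × ℝ) × ℝ => f p.1 p.2) p₀
      = 0 := by
    linear_combination (norm := module) hd + b p₀.1 p₀.2 • e2
  have hcoef := (hlinind.eq_zero_of_pair h0).2
  have hKey : vd (vd (fun p : (ℝ × ℝ) × ℝ => c p.1 p.2)) p₀
      = -(ε * c p₀.1 p₀.2) - b p₀.1 p₀.2 * vd (fun p : (ℝ × ℝ) × ℝ => c p.1 p.2) p₀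
        + (fderiv ℝ (fun p : (ℝ × ℝ) × ℝ => b p.1 p.2) p₀ (f p₀.1 p₀.2, 0) - c p₀.1 p₀.2 * vd (fun p : (ℝ × ℝ) × ℝ => b p.1 p.2) p₀) := by
    linear_combination hcoef
  -- final assembly
  rw [hLHS, hbr2, hLHb]
  rw [show Ham f c p₀ = (f p₀.1 p₀.2, -c p₀.1 p₀.2) from rfl,
    show Vert p₀ = ((0, 0), 1) from rfl]
  simp only [Prod.smul_mk, Prod.mk_add_mk, Prod.mk.injEq, smul_eq_mul, mul_one, mul_neg]
  constructor
  · rw [hS2p0]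
    simp only [mul_zero, Prod.mk_zero_zero, add_zero]
    module
  · rw [hKey]
    ring
end

section
/- Under assumptions (S1)–(S3), the control curvature κ := L_{H'}c − L_H c' and the centro-affine curvature b satisfy the relation ∂κ/∂θ + b·κ + L_H(L_H b) = 0 on U × ℝ. -/
open Set

noncomputable section CCRAux

abbrev E3 : (ℝ × ℝ) × ℝ := ((0,0),1)

variable {Fs : Type*} [NormedAddCommGroup Fs] [NormedSpace ℝ Fs]

lemma hasDerivAt_slice (A : (ℝ × ℝ) × ℝ → Fs) (q : ℝ × ℝ) (θ : ℝ)
    (hA : DifferentiableAt ℝ A (q, θ)) :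
    HasDerivAt (fun t => A (q, t)) (fderiv ℝ A (q, θ) E3) θ := by
  have h1 : HasDerivAt (fun t : ℝ => ((q, t) : (ℝ×ℝ)×ℝ)) E3 θ := by
    exact (HasDerivAt.prodMk (hasDerivAt_const θ q) (hasDerivAt_id θ))
  exact (hA.hasFDerivAt.comp_hasDerivAt θ h1)

lemma hasFDerivAt_slice (A : (ℝ × ℝ) × ℝ → Fs) (q : ℝ × ℝ) (θ : ℝ)
    (hA : DifferentiableAt ℝ A (q, θ)) :
    HasFDerivAt (fun p => A (p, θ))
      ((fderiv ℝ A (q,θ)).comp (ContinuousLinearMap.inl ℝ (ℝ×ℝ) ℝ)) q := by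
  have h1 : HasFDerivAt (fun p : ℝ×ℝ => ((p, θ) : (ℝ×ℝ)×ℝ))
      (ContinuousLinearMap.inl ℝ (ℝ×ℝ) ℝ) q := by
    have h2 : HasFDerivAt (fun p : ℝ×ℝ => ((p, θ) : (ℝ×ℝ)×ℝ))
        ((ContinuousLinearMap.id ℝ (ℝ×ℝ)).prod (0 : (ℝ×ℝ) →L[ℝ] ℝ)) q :=
      HasFDerivAt.prodMk (hasFDerivAt_id q) (hasFDerivAt_const θ q)
    convert h2 using 1
    ext <;> simp
  exact hA.hasFDerivAt.comp q h1

lemma fderiv_slice_apply (A : (ℝ × ℝ) × ℝ → Fs) (q : ℝ × ℝ) (θ : ℝ)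
    (hA : DifferentiableAt ℝ A (q,θ)) (v : ℝ × ℝ) :
    fderiv ℝ (fun p => A (p,θ)) q v = fderiv ℝ A (q,θ) ((v, 0)) := by
  rw [(hasFDerivAt_slice A q θ hA).fderiv]
  simp

lemma contDiffOn_dderiv {W : Set ((ℝ×ℝ)×ℝ)} (hW : IsOpen W) (A : (ℝ×ℝ)×ℝ → Fs)
    (hA : ContDiffOn ℝ (⊤ : ℕ∞) A W) (v : (ℝ×ℝ)×ℝ) :
    ContDiffOn ℝ (⊤ : ℕ∞) (fun x => fderiv ℝ A x v) W := by
  have h1 : ContDiffOn ℝ (⊤ : ℕ∞) (fderiv ℝ A) W := hA.fderiv_of_isOpen hW (by simp)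
  exact (ContinuousLinearMap.apply ℝ Fs v).contDiff.comp_contDiffOn h1

lemma second_symm {W : Set ((ℝ×ℝ)×ℝ)} (hW : IsOpen W) {p : (ℝ×ℝ)×ℝ} (hp : p ∈ W)
    (A : (ℝ×ℝ)×ℝ → Fs) (hA : ContDiffOn ℝ (⊤ : ℕ∞) A W) (u v : (ℝ×ℝ)×ℝ) :
    fderiv ℝ (fderiv ℝ A) p u v = fderiv ℝ (fderiv ℝ A) p v u := by
  have hd : ContDiffOn ℝ (⊤ : ℕ∞) (fderiv ℝ A) W := hA.fderiv_of_isOpen hW (by simp)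
  have hev : ∀ᶠ y in nhds p, HasFDerivAt A (fderiv ℝ A y) y := by
    filter_upwards [hW.mem_nhds hp] with y hy
    exact ((hA.differentiableOn (by simp)).differentiableAt (hW.mem_nhds hy)).hasFDerivAt
  have hx : HasFDerivAt (fderiv ℝ A) (fderiv ℝ (fderiv ℝ A) p) p :=
    ((hd.differentiableOn (by simp)).differentiableAt (hW.mem_nhds hp)).hasFDerivAt
  exact second_derivative_symmetric_of_eventually hev hx u v

lemma fderiv_dderiv {W : Set ((ℝ×ℝ)×ℝ)} (hW : IsOpen W) {p : (ℝ×ℝ)×ℝ} (hp : p ∈ W)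
    (A : (ℝ×ℝ)×ℝ → Fs) (hA : ContDiffOn ℝ (⊤ : ℕ∞) A W) (w v : (ℝ×ℝ)×ℝ) :
    fderiv ℝ (fun x => fderiv ℝ A x w) p v = fderiv ℝ (fderiv ℝ A) p v w := by
  have hd : ContDiffOn ℝ (⊤ : ℕ∞) (fderiv ℝ A) W := hA.fderiv_of_isOpen hW (by simp)
  have hdiff : DifferentiableAt ℝ (fderiv ℝ A) p :=
    (hd.differentiableOn (by simp)).differentiableAt (hW.mem_nhds hp)
  have := fderiv_clm_apply (𝕜 := ℝ) hdiff (differentiableAt_const w)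
  rw [this]; simp

lemma diffAt_of {W : Set ((ℝ×ℝ)×ℝ)} (hW : IsOpen W) {p : (ℝ×ℝ)×ℝ} (hp : p ∈ W)
    {A : (ℝ×ℝ)×ℝ → Fs} (hA : ContDiffOn ℝ (⊤ : ℕ∞) A W) : DifferentiableAt ℝ A p :=
  (hA.differentiableOn (by simp)).differentiableAt (hW.mem_nhds hp)

lemma pair_decomp (v w : ℝ × ℝ) (a bv : ℝ) :
    ((-(a • v) - bv • w, (0:ℝ)) : (ℝ×ℝ)×ℝ) = -(a • ((v,0):(ℝ×ℝ)×ℝ)) - bv • ((w,0):(ℝ×ℝ)×ℝ) := by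
  ext <;> simp

/-- The integrability relation `X b = ε c + c'' + b c' + b' c`. -/
lemma I1rel {W : Set ((ℝ×ℝ)×ℝ)} (hW : IsOpen W) (ε : ℝ)
    (Ft : (ℝ×ℝ)×ℝ → ℝ × ℝ) (Bt Ct : (ℝ×ℝ)×ℝ → ℝ)
    (hF : ContDiffOn ℝ (⊤ : ℕ∞) Ft W) (hB : ContDiffOn ℝ (⊤ : ℕ∞) Bt W) (hC : ContDiffOn ℝ (⊤ : ℕ∞) Ct W)
    (hS2t : ∀ x ∈ W, fderiv ℝ (fun y => fderiv ℝ Ft y E3) x E3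
        = -(ε • Ft x) - Bt x • fderiv ℝ Ft x E3)
    (hS3t : ∀ x ∈ W, fderiv ℝ (fun y => fderiv ℝ Ft y E3) x ((Ft x, 0))
          - fderiv ℝ Ft x ((fderiv ℝ Ft x E3, 0))
        = -((ε * Ct x) • Ft x) - (fderiv ℝ Ct x E3 + Bt x * Ct x) • fderiv ℝ Ft x E3)
    {q : ℝ × ℝ} {θ : ℝ} (hp : ((q,θ) : (ℝ×ℝ)×ℝ) ∈ W)
    (hGne : fderiv ℝ Ft (q,θ) E3 ≠ 0) :
    fderiv ℝ Bt (q,θ) ((Ft (q,θ), 0))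
      = ε * Ct (q,θ) + fderiv ℝ (fun y => fderiv ℝ Ct y E3) (q,θ) E3
        + Bt (q,θ) * fderiv ℝ Ct (q,θ) E3 + fderiv ℝ Bt (q,θ) E3 * Ct (q,θ) := by
  set p : (ℝ×ℝ)×ℝ := (q,θ) with hpdef
  set G : (ℝ×ℝ)×ℝ → ℝ × ℝ := fun y => fderiv ℝ Ft y E3 with hGdef
  set C1 : (ℝ×ℝ)×ℝ → ℝ := fun y => fderiv ℝ Ct y E3 with hC1def
  have hG : ContDiffOn ℝ (⊤ : ℕ∞) G W := contDiffOn_dderiv hW Ft hF E3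
  have hC1 : ContDiffOn ℝ (⊤ : ℕ∞) C1 W := contDiffOn_dderiv hW Ct hC E3
  have hdF := diffAt_of hW hp hF
  have hdG := diffAt_of hW hp hG
  have hdB := diffAt_of hW hp hB
  have hdC := diffAt_of hW hp hC
  have hdC1 := diffAt_of hW hp hC1
  have hdFF : DifferentiableAt ℝ (fderiv ℝ Ft) p :=
    diffAt_of hW hp (hF.fderiv_of_isOpen hW (by simp))
  have hdGG : DifferentiableAt ℝ (fderiv ℝ G) p :=
    diffAt_of hW hp (hG.fderiv_of_isOpen hW (by simp))
  set Fp := Ft p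
  set Gp := G p
  set Cv := Ct p
  set Bv := Bt p
  set C1v := C1 p
  set C2v := fderiv ℝ C1 p E3
  set B1v := fderiv ℝ Bt p E3
  set G1v := fderiv ℝ G p E3 with hG1def
  set XB := fderiv ℝ Bt p ((Fp, 0)) with hXBdef
  have cF : HasDerivAt (fun t => Ft (q,t)) Gp θ := hasDerivAt_slice Ft q θ hdF
  have cG : HasDerivAt (fun t => G (q,t)) G1v θ := hasDerivAt_slice G q θ hdG
  have cB : HasDerivAt (fun t => Bt (q,t)) B1v θ := hasDerivAt_slice Bt q θ hdB
  have cC : HasDerivAt (fun t => Ct (q,t)) C1v θ := hasDerivAt_slice Ct q θ hdC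
  have cC1 : HasDerivAt (fun t => C1 (q,t)) C2v θ := hasDerivAt_slice C1 q θ hdC1
  have cFF : HasDerivAt (fun t => fderiv ℝ Ft (q,t)) (fderiv ℝ (fderiv ℝ Ft) p E3) θ :=
    hasDerivAt_slice (fderiv ℝ Ft) q θ hdFF
  have cGG : HasDerivAt (fun t => fderiv ℝ G (q,t)) (fderiv ℝ (fderiv ℝ G) p E3) θ :=
    hasDerivAt_slice (fderiv ℝ G) q θ hdGG
  have cFpair : HasDerivAt (fun t => ((Ft (q,t), 0) : (ℝ×ℝ)×ℝ)) ((Gp, 0)) θ :=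
    HasDerivAt.prodMk cF (hasDerivAt_const θ (0:ℝ))
  have cGpair : HasDerivAt (fun t => ((G (q,t), 0) : (ℝ×ℝ)×ℝ)) ((G1v, 0)) θ :=
    HasDerivAt.prodMk cG (hasDerivAt_const θ (0:ℝ))
  have hΦ : HasDerivAt (fun t => fderiv ℝ G (q,t) ((Ft (q,t), 0))
        - fderiv ℝ Ft (q,t) ((G (q,t), 0)))
      ((fderiv ℝ (fderiv ℝ G) p E3 ((Fp,0)) + fderiv ℝ G p ((Gp,0)))
        - (fderiv ℝ (fderiv ℝ Ft) p E3 ((Gp,0)) + fderiv ℝ Ft p ((G1v,0)))) θ :=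
    (cGG.clm_apply cFpair).sub (cFF.clm_apply cGpair)
  have hΨ : HasDerivAt (fun t => -((ε * Ct (q,t)) • Ft (q,t))
        - (C1 (q,t) + Bt (q,t) * Ct (q,t)) • G (q,t))
      (-((ε * Cv) • Gp + (ε * C1v) • Fp)
        - ((C1v + Bv * Cv) • G1v + (C2v + (B1v * Cv + Bv * C1v)) • Gp)) θ :=
    ((cC.const_mul ε).smul cF).neg.sub ((cC1.add (cB.mul cC)).smul cG)
  have hev : ∀ᶠ t in nhds θ, (fun t => fderiv ℝ G (q,t) ((Ft (q,t), 0))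
        - fderiv ℝ Ft (q,t) ((G (q,t), 0))) t
      = (fun t => -((ε * Ct (q,t)) • Ft (q,t))
        - (C1 (q,t) + Bt (q,t) * Ct (q,t)) • G (q,t)) t := by
    have hcont : ContinuousAt (fun t : ℝ => ((q,t) : (ℝ×ℝ)×ℝ)) θ :=
      (continuous_const.prodMk continuous_id).continuousAt
    filter_upwards [hcont.preimage_mem_nhds (hW.mem_nhds hp)] with t ht
    exact hS3t (q,t) ht
  have hdeq : (fderiv ℝ (fderiv ℝ G) p E3 ((Fp,0)) + fderiv ℝ G p ((Gp,0)))
        - (fderiv ℝ (fderiv ℝ Ft) p E3 ((Gp,0)) + fderiv ℝ Ft p ((G1v,0)))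
      = -((ε * Cv) • Gp + (ε * C1v) • Fp)
        - ((C1v + Bv * Cv) • G1v + (C2v + (B1v * Cv + Bv * C1v)) • Gp) := by
    rw [← hΦ.deriv, ← hΨ.deriv]
    exact Filter.EventuallyEq.deriv_eq hev
  have hG1val : G1v = -(ε • Fp) - Bv • Gp := hS2t p hp
  have a1 : fderiv ℝ (fderiv ℝ G) p E3 ((Fp,0))
      = -(ε • fderiv ℝ Ft p ((Fp,0))) - (Bv • fderiv ℝ G p ((Fp,0)) + XB • Gp) := by
    rw [second_symm hW hp G hG E3 ((Fp,0)), ← fderiv_dderiv hW hp G hG E3 ((Fp,0))]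
    have s2 : (fun x => fderiv ℝ G x E3) =ᶠ[nhds p] (fun x => -(ε • Ft x) - Bt x • G x) := by
      filter_upwards [hW.mem_nhds hp] with x hx
      exact hS2t x hx
    rw [s2.fderiv_eq]
    have s3 : HasFDerivAt (fun x => -(ε • Ft x) - Bt x • G x)
        (-(ε • fderiv ℝ Ft p) - (Bv • fderiv ℝ G p + (fderiv ℝ Bt p).smulRight Gp)) p :=
      ((hdF.hasFDerivAt.const_smul ε).neg.sub ((hdB.hasFDerivAt).smul hdG.hasFDerivAt))
    rw [s3.fderiv]
    simp [XB]
  have a2 : fderiv ℝ (fderiv ℝ Ft) p E3 ((Gp,0)) = fderiv ℝ G p ((Gp,0)) := by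
    rw [second_symm hW hp Ft hF E3 ((Gp,0)), ← fderiv_dderiv hW hp Ft hF E3 ((Gp,0))]
  have a3 : fderiv ℝ Ft p ((G1v, 0))
      = -(ε • fderiv ℝ Ft p ((Fp,0))) - Bv • fderiv ℝ Ft p ((Gp,0)) := by
    rw [hG1val, pair_decomp, map_sub, map_neg, map_smul, map_smul]
  have hS3p : fderiv ℝ G p ((Fp,0)) - fderiv ℝ Ft p ((Gp,0))
      = -((ε * Cv) • Fp) - (C1v + Bv * Cv) • Gp := hS3t p hp
  rw [a1, a2, a3, hG1val] at hdeq
  have hz : (ε * Cv + C2v + Bv * C1v + B1v * Cv - XB) • Gp = 0 := by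
    linear_combination (norm := module) hdeq + Bv • hS3p
  have hs : ε * Cv + C2v + Bv * C1v + B1v * Cv - XB = 0 :=
    (smul_eq_zero.mp hz).resolve_right hGne
  linarith

end CCRAux

/-- **Proposition 1.** Under assumptions (S1)–(S3), the control curvature
`κ := L_{H′}c − L_H c′` and the centro-affine curvature `b` satisfy
`∂κ/∂θ + b·κ + L_H(L_H b) = 0` on `U × ℝ`. -/
theorem curvature_centroaffine_relation
    (U : Set (ℝ × ℝ)) (hU : IsOpen U) (hUconn : IsConnected U)
    (ε : ℝ) (hε : ε = 1 ∨ ε = -1)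
    (f : ℝ × ℝ → ℝ → ℝ × ℝ) (b c : ℝ × ℝ → ℝ → ℝ)
    (hf : ContDiffOn ℝ (⊤ : ℕ∞) (fun p : (ℝ × ℝ) × ℝ => f p.1 p.2) (U ×ˢ univ))
    (hb : ContDiffOn ℝ (⊤ : ℕ∞) (fun p : (ℝ × ℝ) × ℝ => b p.1 p.2) (U ×ˢ univ))
    (hc : ContDiffOn ℝ (⊤ : ℕ∞) (fun p : (ℝ × ℝ) × ℝ => c p.1 p.2) (U ×ˢ univ))
    (hS1 : ∀ q ∈ U, ∀ θ : ℝ, LinearIndependent ℝ ![f q θ, deriv (f q) θ])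
    (hS2 : ∀ q ∈ U, ∀ θ : ℝ,
      deriv (deriv (f q)) θ = -(ε • f q θ) - b q θ • deriv (f q) θ)
    (hS3 : ∀ θ : ℝ, ∀ q ∈ U,
      lieBracket2 (fun p => f p θ) (fun p => deriv (f p) θ) q
        = -((ε * c q θ) • f q θ) - (deriv (c q) θ + b q θ * c q θ) • deriv (f q) θ)
    :
    ∀ q ∈ U, ∀ θ : ℝ,
      deriv (controlCurvature f c q) θ + b q θ * controlCurvature f c q θ
        + LH f c (LH f c b) q θ = 0 := by
  intro q hq θ
  have hW : IsOpen ((U ×ˢ (univ : Set ℝ)) : Set ((ℝ×ℝ)×ℝ)) := hU.prod isOpen_univ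
  set Ft : (ℝ×ℝ)×ℝ → ℝ×ℝ := fun p => f p.1 p.2 with hFtdef
  set Bt : (ℝ×ℝ)×ℝ → ℝ := fun p => b p.1 p.2 with hBtdef
  set Ct : (ℝ×ℝ)×ℝ → ℝ := fun p => c p.1 p.2 with hCtdef
  have hmem : ∀ (q' : ℝ×ℝ), q' ∈ U → ∀ t : ℝ, ((q',t) : (ℝ×ℝ)×ℝ) ∈ U ×ˢ (univ : Set ℝ) :=
    fun q' h t => mk_mem_prod h (mem_univ t)
  set G : (ℝ×ℝ)×ℝ → ℝ×ℝ := fun y => fderiv ℝ Ft y E3 with hGdef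
  set C1 : (ℝ×ℝ)×ℝ → ℝ := fun y => fderiv ℝ Ct y E3 with hC1def
  set C2 : (ℝ×ℝ)×ℝ → ℝ := fun y => fderiv ℝ C1 y E3 with hC2def
  have hG : ContDiffOn ℝ (⊤ : ℕ∞) G (U ×ˢ univ) := contDiffOn_dderiv hW Ft hf E3
  have hC1s : ContDiffOn ℝ (⊤ : ℕ∞) C1 (U ×ˢ univ) := contDiffOn_dderiv hW Ct hc E3
  have hC2s : ContDiffOn ℝ (⊤ : ℕ∞) C2 (U ×ˢ univ) := contDiffOn_dderiv hW C1 hC1s E3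
  -- slice derivative translations
  have hfd : ∀ q' ∈ U, ∀ t : ℝ, deriv (f q') t = G (q',t) := fun q' h t =>
    (hasDerivAt_slice Ft q' t (diffAt_of hW (hmem q' h t) hf)).deriv
  have hcd : ∀ q' ∈ U, ∀ t : ℝ, deriv (c q') t = C1 (q',t) := fun q' h t =>
    (hasDerivAt_slice Ct q' t (diffAt_of hW (hmem q' h t) hc)).deriv
  have hbd : ∀ q' ∈ U, ∀ t : ℝ, deriv (b q') t = fderiv ℝ Bt (q',t) E3 := fun q' h t =>
    (hasDerivAt_slice Bt q' t (diffAt_of hW (hmem q' h t) hb)).deriv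
  have hcd2 : ∀ q' ∈ U, ∀ t : ℝ, deriv (deriv (c q')) t = C2 (q',t) := by
    intro q' h t
    rw [show deriv (c q') = fun s => C1 (q',s) from funext (fun s => hcd q' h s)]
    exact (hasDerivAt_slice C1 q' t (diffAt_of hW (hmem q' h t) hC1s)).deriv
  have hfd2 : ∀ q' ∈ U, ∀ t : ℝ, deriv (deriv (f q')) t = fderiv ℝ G (q',t) E3 := by
    intro q' h t
    rw [show deriv (f q') = fun s => G (q',s) from funext (fun s => hfd q' h s)]
    exact (hasDerivAt_slice G q' t (diffAt_of hW (hmem q' h t) hG)).deriv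
  -- total form of S2
  have hS2t : ∀ x ∈ U ×ˢ (univ : Set ℝ), fderiv ℝ G x E3 = -(ε • Ft x) - Bt x • G x := by
    rintro ⟨q', t⟩ ⟨hq', -⟩
    have h2 := hS2 q' hq' t
    rw [hfd2 q' hq' t, hfd q' hq' t] at h2
    exact h2
  -- total form of S3
  have hS3t : ∀ x ∈ U ×ˢ (univ : Set ℝ),
      fderiv ℝ G x ((Ft x, 0)) - fderiv ℝ Ft x ((G x, 0))
        = -((ε * Ct x) • Ft x) - (C1 x + Bt x * Ct x) • G x := by
    rintro ⟨q', t⟩ ⟨hq', -⟩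
    have h3 := hS3 t q' hq'
    simp only [lieBracket2] at h3
    have hev1 : (fun p => deriv (f p) t) =ᶠ[nhds q'] (fun p => G (p,t)) := by
      filter_upwards [hU.mem_nhds hq'] with x hx
      exact hfd x hx t
    rw [hev1.fderiv_eq] at h3
    have e1 : fderiv ℝ (fun p => G (p,t)) q' (f q' t) = fderiv ℝ G (q',t) ((f q' t, 0)) :=
      fderiv_slice_apply G q' t (diffAt_of hW (hmem q' hq' t) hG) (f q' t)
    have e2 : fderiv ℝ (fun p => f p t) q' (deriv (f q') t)
        = fderiv ℝ Ft (q',t) ((deriv (f q') t, 0)) :=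
      fderiv_slice_apply Ft q' t (diffAt_of hW (hmem q' hq' t) hf) (deriv (f q') t)
    rw [e1, e2, hfd q' hq' t, hcd q' hq' t] at h3
    exact h3
  -- G never vanishes
  have hGne : ∀ q' ∈ U, ∀ t : ℝ, G (q',t) ≠ 0 := by
    intro q' h t
    have h2 : deriv (f q') t ≠ 0 := by
      simpa using (hS1 q' h t).ne_zero 1
    rw [hfd q' h t] at h2
    exact h2
  -- integrability relation
  have hI1 : ∀ q' ∈ U, ∀ t : ℝ, fderiv ℝ Bt (q',t) ((Ft (q',t), 0))
      = ε * Ct (q',t) + C2 (q',t) + Bt (q',t) * C1 (q',t)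
        + fderiv ℝ Bt (q',t) E3 * Ct (q',t) :=
    fun q' h t => I1rel hW ε Ft Bt Ct hf hb hc hS2t hS3t (hmem q' h t) (hGne q' h t)
  -- L_H b in total form
  have hΛ : ∀ q' ∈ U, ∀ t : ℝ, LH f c b q' t
      = ε * Ct (q',t) + C2 (q',t) + Bt (q',t) * C1 (q',t) := by
    intro q' h t
    have hu : LH f c b q' t
        = fderiv ℝ (fun p => b p t) q' (f q' t) - c q' t * deriv (b q') t := rfl
    have e1 : fderiv ℝ (fun p => b p t) q' (f q' t) = fderiv ℝ Bt (q',t) ((f q' t, 0)) :=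
      fderiv_slice_apply Bt q' t (diffAt_of hW (hmem q' h t) hb) (f q' t)
    have e1' : fderiv ℝ Bt (q',t) ((f q' t, 0)) = fderiv ℝ Bt (q',t) ((Ft (q',t), 0)) := rfl
    have hc' : c q' t = Ct (q',t) := rfl
    rw [hu, e1, e1', hc', hbd q' h t, hI1 q' h t]
    ring
  -- κ in total form
  have hκ : controlCurvature f c q = fun t =>
      (fderiv ℝ Ct (q,t) ((G (q,t), 0)) - C1 (q,t) * C1 (q,t))
        - (fderiv ℝ C1 (q,t) ((Ft (q,t), 0)) - Ct (q,t) * C2 (q,t)) := by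
    funext t
    have hu : controlCurvature f c q t
        = (fderiv ℝ (fun p => c p t) q (deriv (f q) t) - deriv (c q) t * deriv (c q) t)
          - (fderiv ℝ (fun p => deriv (c p) t) q (f q t)
            - c q t * deriv (fun s => deriv (c q) s) t) := rfl
    have e1 : fderiv ℝ (fun p => c p t) q (deriv (f q) t)
        = fderiv ℝ Ct (q,t) ((deriv (f q) t, 0)) :=
      fderiv_slice_apply Ct q t (diffAt_of hW (hmem q hq t) hc) (deriv (f q) t)
    have hev2 : (fun p => deriv (c p) t) =ᶠ[nhds q] (fun p => C1 (p,t)) := by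
      filter_upwards [hU.mem_nhds hq] with x hx
      exact hcd x hx t
    have e2 : fderiv ℝ (fun p => deriv (c p) t) q (f q t)
        = fderiv ℝ C1 (q,t) ((f q t, 0)) := by
      rw [hev2.fderiv_eq]
      exact fderiv_slice_apply C1 q t (diffAt_of hW (hmem q hq t) hC1s) (f q t)
    have e2' : fderiv ℝ C1 (q,t) ((f q t, 0)) = fderiv ℝ C1 (q,t) ((Ft (q,t), 0)) := rfl
    have e3 : deriv (fun s => deriv (c q) s) t = C2 (q,t) := hcd2 q hq t
    have hc' : c q t = Ct (q,t) := rfl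
    rw [hu, e1, e2, e2', e3, hfd q hq t, hcd q hq t, hc']
  -- differentiability at (q,θ)
  have hp : ((q,θ) : (ℝ×ℝ)×ℝ) ∈ U ×ˢ (univ : Set ℝ) := hmem q hq θ
  have hdF := diffAt_of hW hp hf
  have hdG := diffAt_of hW hp hG
  have hdB := diffAt_of hW hp hb
  have hdC := diffAt_of hW hp hc
  have hdC1 := diffAt_of hW hp hC1s
  have hdC2 := diffAt_of hW hp hC2s
  have hdCC : DifferentiableAt ℝ (fderiv ℝ Ct) (q,θ) :=
    diffAt_of hW hp (hc.fderiv_of_isOpen hW (by simp))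
  have hdCC1 : DifferentiableAt ℝ (fderiv ℝ C1) (q,θ) :=
    diffAt_of hW hp (hC1s.fderiv_of_isOpen hW (by simp))
  -- curves
  have cF : HasDerivAt (fun t => Ft (q,t)) (G (q,θ)) θ := hasDerivAt_slice Ft q θ hdF
  have cG : HasDerivAt (fun t => G (q,t)) (fderiv ℝ G (q,θ) E3) θ := hasDerivAt_slice G q θ hdG
  have cB : HasDerivAt (fun t => Bt (q,t)) (fderiv ℝ Bt (q,θ) E3) θ := hasDerivAt_slice Bt q θ hdB
  have cC : HasDerivAt (fun t => Ct (q,t)) (C1 (q,θ)) θ := hasDerivAt_slice Ct q θ hdC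
  have cC1 : HasDerivAt (fun t => C1 (q,t)) (C2 (q,θ)) θ := hasDerivAt_slice C1 q θ hdC1
  have cC2 : HasDerivAt (fun t => C2 (q,t)) (fderiv ℝ C2 (q,θ) E3) θ :=
    hasDerivAt_slice C2 q θ hdC2
  have cCC : HasDerivAt (fun t => fderiv ℝ Ct (q,t)) (fderiv ℝ (fderiv ℝ Ct) (q,θ) E3) θ :=
    hasDerivAt_slice (fderiv ℝ Ct) q θ hdCC
  have cCC1 : HasDerivAt (fun t => fderiv ℝ C1 (q,t)) (fderiv ℝ (fderiv ℝ C1) (q,θ) E3) θ :=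
    hasDerivAt_slice (fderiv ℝ C1) q θ hdCC1
  have cFpair : HasDerivAt (fun t => ((Ft (q,t), 0) : (ℝ×ℝ)×ℝ)) ((G (q,θ), 0)) θ :=
    HasDerivAt.prodMk cF (hasDerivAt_const θ (0:ℝ))
  have cGpair : HasDerivAt (fun t => ((G (q,t), 0) : (ℝ×ℝ)×ℝ)) ((fderiv ℝ G (q,θ) E3, 0)) θ :=
    HasDerivAt.prodMk cG (hasDerivAt_const θ (0:ℝ))
  -- derivative of κ
  have hκd : HasDerivAt (controlCurvature f c q)
      (((fderiv ℝ (fderiv ℝ Ct) (q,θ) E3 ((G (q,θ), 0))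
          + fderiv ℝ Ct (q,θ) ((fderiv ℝ G (q,θ) E3, 0)))
        - (C2 (q,θ) * C1 (q,θ) + C1 (q,θ) * C2 (q,θ)))
        - ((fderiv ℝ (fderiv ℝ C1) (q,θ) E3 ((Ft (q,θ), 0))
            + fderiv ℝ C1 (q,θ) ((G (q,θ), 0)))
          - (C1 (q,θ) * C2 (q,θ) + Ct (q,θ) * fderiv ℝ C2 (q,θ) E3))) θ := by
    rw [hκ]
    exact ((cCC.clm_apply cGpair).sub (cC1.mul cC1)).sub
      ((cCC1.clm_apply cFpair).sub (cC.mul cC2))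
  -- symmetry conversions
  have b1 : fderiv ℝ (fderiv ℝ Ct) (q,θ) E3 ((G (q,θ), 0))
      = fderiv ℝ C1 (q,θ) ((G (q,θ), 0)) := by
    rw [second_symm hW hp Ct hc E3 ((G (q,θ), 0)),
      ← fderiv_dderiv hW hp Ct hc E3 ((G (q,θ), 0))]
  have b3 : fderiv ℝ (fderiv ℝ C1) (q,θ) E3 ((Ft (q,θ), 0))
      = fderiv ℝ C2 (q,θ) ((Ft (q,θ), 0)) := by
    rw [second_symm hW hp C1 hC1s E3 ((Ft (q,θ), 0)),
      ← fderiv_dderiv hW hp C1 hC1s E3 ((Ft (q,θ), 0))]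
  have hG1val : fderiv ℝ G (q,θ) E3 = -(ε • Ft (q,θ)) - Bt (q,θ) • G (q,θ) := hS2t (q,θ) hp
  have b2 : fderiv ℝ Ct (q,θ) ((fderiv ℝ G (q,θ) E3, 0))
      = -(ε • fderiv ℝ Ct (q,θ) ((Ft (q,θ), 0)))
        - Bt (q,θ) • fderiv ℝ Ct (q,θ) ((G (q,θ), 0)) := by
    rw [hG1val, pair_decomp, map_sub, map_neg, map_smul, map_smul]
  -- outer L_H L_H b
  have hΛF : HasFDerivAt (fun x : (ℝ×ℝ)×ℝ => ε * Ct x + C2 x + Bt x * C1 x)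
      (ε • fderiv ℝ Ct (q,θ) + fderiv ℝ C2 (q,θ)
        + (Bt (q,θ) • fderiv ℝ C1 (q,θ) + C1 (q,θ) • fderiv ℝ Bt (q,θ))) (q,θ) :=
    ((hdC.hasFDerivAt.const_mul ε).add hdC2.hasFDerivAt).add
      (hdB.hasFDerivAt.mul hdC1.hasFDerivAt)
  have hev3 : (fun p' => LH f c b p' θ)
      =ᶠ[nhds q] (fun p' => ε * Ct (p',θ) + C2 (p',θ) + Bt (p',θ) * C1 (p',θ)) := by
    filter_upwards [hU.mem_nhds hq] with x hx
    exact hΛ x hx θ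
  have e4 : fderiv ℝ (fun p' => LH f c b p' θ) q (f q θ)
      = ε * fderiv ℝ Ct (q,θ) ((Ft (q,θ), 0)) + fderiv ℝ C2 (q,θ) ((Ft (q,θ), 0))
        + (Bt (q,θ) * fderiv ℝ C1 (q,θ) ((Ft (q,θ), 0))
          + C1 (q,θ) * fderiv ℝ Bt (q,θ) ((Ft (q,θ), 0))) := by
    rw [hev3.fderiv_eq]
    have e4a : fderiv ℝ (fun p' : ℝ×ℝ => ε * Ct (p',θ) + C2 (p',θ) + Bt (p',θ) * C1 (p',θ))
        q (f q θ)
        = fderiv ℝ (fun x : (ℝ×ℝ)×ℝ => ε * Ct x + C2 x + Bt x * C1 x) (q,θ) ((f q θ, 0)) :=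
      fderiv_slice_apply (fun x : (ℝ×ℝ)×ℝ => ε * Ct x + C2 x + Bt x * C1 x) q θ
        hΛF.differentiableAt (f q θ)
    rw [e4a, hΛF.fderiv]
    have : ((f q θ, 0) : (ℝ×ℝ)×ℝ) = ((Ft (q,θ), 0) : (ℝ×ℝ)×ℝ) := rfl
    rw [this]
    simp [smul_eq_mul]
  have e5 : deriv (LH f c b q) θ
      = ε * C1 (q,θ) + fderiv ℝ C2 (q,θ) E3
        + (fderiv ℝ Bt (q,θ) E3 * C1 (q,θ) + Bt (q,θ) * C2 (q,θ)) := by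
    rw [show LH f c b q = fun t => ε * Ct (q,t) + C2 (q,t) + Bt (q,t) * C1 (q,t)
      from funext (fun t => hΛ q hq t)]
    exact (((cC.const_mul ε).add cC2).add (cB.mul cC1)).deriv
  have hout : LH f c (LH f c b) q θ
      = (ε * fderiv ℝ Ct (q,θ) ((Ft (q,θ), 0)) + fderiv ℝ C2 (q,θ) ((Ft (q,θ), 0))
          + (Bt (q,θ) * fderiv ℝ C1 (q,θ) ((Ft (q,θ), 0))
            + C1 (q,θ) * (ε * Ct (q,θ) + C2 (q,θ) + Bt (q,θ) * C1 (q,θ)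
              + fderiv ℝ Bt (q,θ) E3 * Ct (q,θ))))
        - Ct (q,θ) * (ε * C1 (q,θ) + fderiv ℝ C2 (q,θ) E3
            + (Bt (q,θ) * C2 (q,θ) + fderiv ℝ Bt (q,θ) E3 * C1 (q,θ))) := by
    have hu : LH f c (LH f c b) q θ
        = fderiv ℝ (fun p' => LH f c b p' θ) q (f q θ) - c q θ * deriv (LH f c b q) θ := rfl
    have hc' : c q θ = Ct (q,θ) := rfl
    rw [hu, hc', e4, e5, hI1 q hq θ]
    ring
  have hκθ : controlCurvature f c q θ
      = (fderiv ℝ Ct (q,θ) ((G (q,θ), 0)) - C1 (q,θ) * C1 (q,θ))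
        - (fderiv ℝ C1 (q,θ) ((Ft (q,θ), 0)) - Ct (q,θ) * C2 (q,θ)) := by
    rw [hκ]
  have hb' : b q θ = Bt (q,θ) := rfl
  rw [hκd.deriv, hκθ, hout, b1, b2, b3, hb']
  simp only [smul_eq_mul]
  ring
end

section
/- Under assumptions (S1)–(S3), if for every θ ∈ ℝ the vector fields q ↦ f(q,θ) and q ↦ f'(q,θ) on U commute (their Lie bracket vanishes identically), then c ≡ 0 on U × ℝ, and consequently the control curvature κ := L_{H'}c − L_H c' and the Lie derivative L_H b both vanish identically on U × ℝ. -/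
open Set

open Filter Topology in
private lemma sliceHasDerivAt {W : Type*} [NormedAddCommGroup W] [NormedSpace ℝ W]
    {G : (ℝ × ℝ) × ℝ → W} {q : ℝ × ℝ} {t : ℝ} (hG : DifferentiableAt ℝ G (q, t)) :
    HasDerivAt (fun s => G (q, s)) (fderiv ℝ G (q, t) ((0, 0), 1)) t := by
  have h := hG.hasFDerivAt.comp_hasDerivAt t ((hasDerivAt_const t q).prodMk (hasDerivAt_id t))
  exact h

open Filter Topology in
private lemma sliceHasFDerivAt {W : Type*} [NormedAddCommGroup W] [NormedSpace ℝ W]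
    {G : (ℝ × ℝ) × ℝ → W} {q : ℝ × ℝ} {t : ℝ} (hG : DifferentiableAt ℝ G (q, t)) :
    HasFDerivAt (fun p => G (p, t))
      ((fderiv ℝ G (q, t)).comp ((ContinuousLinearMap.id ℝ (ℝ × ℝ)).prod 0)) q := by
  have h := hG.hasFDerivAt.comp (f := fun p : ℝ × ℝ => (p, t)) q ((hasFDerivAt_id q).prodMk (hasFDerivAt_const t q))
  exact h


set_option maxHeartbeats 2000000 in
/-- Under assumptions (S1)–(S3), if for every `θ` the vector fields `f(·,θ)` and
`f′(·,θ)` commute on `U`, then `c ≡ 0` on `U × ℝ`, and consequently the control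
curvature `κ` and the Lie derivative `L_H b` vanish identically on `U × ℝ`. -/
theorem commuting_frame_implies_zero_curvature
    (U : Set (ℝ × ℝ)) (hU : IsOpen U) (hUconn : IsConnected U)
    (ε : ℝ) (hε : ε = 1 ∨ ε = -1)
    (f : ℝ × ℝ → ℝ → ℝ × ℝ) (b c : ℝ × ℝ → ℝ → ℝ)
    (hf : ContDiffOn ℝ (⊤ : ℕ∞) (fun p : (ℝ × ℝ) × ℝ => f p.1 p.2) (U ×ˢ univ))
    (hb : ContDiffOn ℝ (⊤ : ℕ∞) (fun p : (ℝ × ℝ) × ℝ => b p.1 p.2) (U ×ˢ univ))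
    (hc : ContDiffOn ℝ (⊤ : ℕ∞) (fun p : (ℝ × ℝ) × ℝ => c p.1 p.2) (U ×ˢ univ))
    (hS1 : ∀ q ∈ U, ∀ θ : ℝ, LinearIndependent ℝ ![f q θ, deriv (f q) θ])
    (hS2 : ∀ q ∈ U, ∀ θ : ℝ,
      deriv (deriv (f q)) θ = -(ε • f q θ) - b q θ • deriv (f q) θ)
    (hS3 : ∀ θ : ℝ, ∀ q ∈ U,
      lieBracket2 (fun p => f p θ) (fun p => deriv (f p) θ) q
        = -((ε * c q θ) • f q θ) - (deriv (c q) θ + b q θ * c q θ) • deriv (f q) θ)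
    (hcomm : ∀ θ : ℝ, ∀ q ∈ U,
      lieBracket2 (fun p => f p θ) (fun p => deriv (f p) θ) q = 0) :
    ∀ q ∈ U, ∀ θ : ℝ,
      c q θ = 0 ∧ controlCurvature f c q θ = 0 ∧ LH f c b q θ = 0 := by
  classical
  set Ω : Set ((ℝ × ℝ) × ℝ) := U ×ˢ univ with hΩdef
  have hΩ : IsOpen Ω := hU.prod isOpen_univ
  set F : (ℝ × ℝ) × ℝ → ℝ × ℝ := fun p => f p.1 p.2 with hFdef
  set D := fderiv ℝ F with hDdef
  set D2 := fderiv ℝ D with hD2def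
  set D3 := fderiv ℝ D2 with hD3def
  have hmem : ∀ (p : ℝ × ℝ), p ∈ U → ∀ t : ℝ, ((p, t) : (ℝ × ℝ) × ℝ) ∈ Ω :=
    fun p hp t => ⟨hp, mem_univ t⟩
  have hFc : ∀ p ∈ Ω, ContDiffAt ℝ (⊤ : ℕ∞) F p := fun p hp => hf.contDiffAt (hΩ.mem_nhds hp)
  have hDc : ∀ p ∈ Ω, ContDiffAt ℝ (⊤ : ℕ∞) D p := fun p hp => (hFc p hp).fderiv_right (by simp)
  have hD2c : ∀ p ∈ Ω, ContDiffAt ℝ (⊤ : ℕ∞) D2 p := fun p hp => (hDc p hp).fderiv_right (by simp)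
  have hFd : ∀ p ∈ U, ∀ t, DifferentiableAt ℝ F (p, t) :=
    fun p hp t => (hFc _ (hmem p hp t)).differentiableAt (by simp)
  have hDd : ∀ p ∈ U, ∀ t, DifferentiableAt ℝ D (p, t) :=
    fun p hp t => (hDc _ (hmem p hp t)).differentiableAt (by simp)
  have hD2d : ∀ p ∈ U, ∀ t, DifferentiableAt ℝ D2 (p, t) :=
    fun p hp t => (hD2c _ (hmem p hp t)).differentiableAt (by simp)
  -- θ-derivatives at fixed q
  have hfq' : ∀ p ∈ U, ∀ t : ℝ, HasDerivAt (f p) (D (p, t) ((0, 0), 1)) t := by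
    intro p hp t
    exact sliceHasDerivAt (hFd p hp t)
  have hg : ∀ p ∈ U, ∀ t, deriv (f p) t = D (p, t) ((0, 0), 1) :=
    fun p hp t => (hfq' p hp t).deriv
  have hf'' : ∀ p ∈ U, ∀ t, HasDerivAt (deriv (f p)) (D2 (p, t) ((0, 0), 1) ((0, 0), 1)) t := by
    intro p hp t
    have h1 : HasDerivAt (fun s => D (p, s)) (D2 (p, t) ((0, 0), 1)) t :=
      sliceHasDerivAt (hDd p hp t)
    have h2 := h1.clm_apply (hasDerivAt_const t (((0, 0), 1) : (ℝ × ℝ) × ℝ))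
    have heq : deriv (f p) = fun s => D (p, s) ((0, 0), 1) := funext fun s => hg p hp s
    rw [heq]
    simpa using h2
  have hf''val : ∀ p ∈ U, ∀ t, deriv (deriv (f p)) t = D2 (p, t) ((0, 0), 1) ((0, 0), 1) :=
    fun p hp t => (hf'' p hp t).deriv
  -- q-derivatives of slices
  have hqf : ∀ p ∈ U, ∀ t : ℝ, HasFDerivAt (fun x => f x t)
      ((D (p, t)).comp ((ContinuousLinearMap.id ℝ (ℝ × ℝ)).prod 0)) p := by
    intro p hp t
    exact sliceHasFDerivAt (hFd p hp t)
  have hqf_fd : ∀ p ∈ U, ∀ t : ℝ, ∀ v : ℝ × ℝ,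
      fderiv ℝ (fun x => f x t) p v = D (p, t) (v, 0) := by
    intro p hp t v
    rw [(hqf p hp t).fderiv]; simp
  have hqg' : ∀ p ∈ U, ∀ t : ℝ, HasFDerivAt (fun x => deriv (f x) t)
      ((D (p, t)).comp (0 : (ℝ × ℝ) →L[ℝ] (ℝ × ℝ) × ℝ) +
        (((D2 (p, t)).comp ((ContinuousLinearMap.id ℝ (ℝ × ℝ)).prod 0)).flip ((0, 0), 1))) p := by
    intro p hp t
    have h1 : HasFDerivAt (fun x => D (x, t))
        ((D2 (p, t)).comp ((ContinuousLinearMap.id ℝ (ℝ × ℝ)).prod 0)) p :=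
      sliceHasFDerivAt (hDd p hp t)
    have h2 := h1.clm_apply (hasFDerivAt_const (((0, 0), 1) : (ℝ × ℝ) × ℝ) p)
    apply h2.congr_of_eventuallyEq
    filter_upwards [hU.mem_nhds hp] with x hx
    exact hg x hx t
  have hqg_fd : ∀ p ∈ U, ∀ t : ℝ, ∀ v : ℝ × ℝ,
      fderiv ℝ (fun x => deriv (f x) t) p v = D2 (p, t) (v, 0) ((0, 0), 1) := by
    intro p hp t v
    rw [(hqg' p hp t).fderiv]; simp
  -- c vanishes
  have hc0 : ∀ p ∈ U, ∀ t : ℝ, c p t = 0 := by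
    intro p hp t
    have h3 := hS3 t p hp
    rw [hcomm t p hp] at h3
    have h3' : (ε * c p t) • f p t + (deriv (c p) t + b p t * c p t) • deriv (f p) t = 0 := by
      have h4 := h3.symm
      have h5 : (ε * c p t) • f p t + (deriv (c p) t + b p t * c p t) • deriv (f p) t
          = -(-((ε * c p t) • f p t) - (deriv (c p) t + b p t * c p t) • deriv (f p) t) := by
        abel
      rw [h5, h4, neg_zero]
    have hpair := (LinearIndependent.pair_iff.mp (hS1 p hp t)) _ _ h3'
    have hεne : ε ≠ 0 := by rcases hε with h | h <;> rw [h] <;> norm_num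
    exact (mul_eq_zero.mp hpair.1).resolve_left hεne
  -- fix the point
  intro q hq θ
  refine ⟨hc0 q hq θ, ?_, ?_⟩
  · -- control curvature vanishes
    have hcq : c q = fun _ => (0 : ℝ) := funext fun t => hc0 q hq t
    have hdcq : deriv (c q) = fun _ => (0 : ℝ) := by
      funext t; rw [hcq]; simp
    have hfd1 : fderiv ℝ (fun p => c p θ) q = 0 := by
      have he : (fun p => c p θ) =ᶠ[nhds q] (fun _ => (0 : ℝ)) :=
        Filter.eventuallyEq_of_mem (hU.mem_nhds hq) (fun p hp => hc0 p hp θ)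
      rw [he.fderiv_eq]; simp
    have hfd2 : fderiv ℝ (fun p => deriv (c p) θ) q = 0 := by
      have he : (fun p => deriv (c p) θ) =ᶠ[nhds q] (fun _ => (0 : ℝ)) := by
        filter_upwards [hU.mem_nhds hq] with p hp
        have : c p = fun _ => (0 : ℝ) := funext fun t => hc0 p hp t
        rw [this]; simp
      rw [he.fderiv_eq]; simp
    simp [controlCurvature, LH, LH', hfd1, hfd2, hdcq, hcq]
  · -- L_H b vanishes
    have hsym2 : ∀ v w, D2 (q, θ) v w = D2 (q, θ) w v := by
      apply second_derivative_symmetric_of_eventually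
      · filter_upwards [hΩ.mem_nhds (hmem q hq θ)] with y hy
        exact ((hFc y hy).differentiableAt (by simp)).hasFDerivAt
      · exact (hDd q hq θ).hasFDerivAt
    have hsym3 : ∀ v w, D3 (q, θ) v w = D3 (q, θ) w v := by
      apply second_derivative_symmetric_of_eventually
      · filter_upwards [hΩ.mem_nhds (hmem q hq θ)] with y hy
        exact ((hDc y hy).differentiableAt (by simp)).hasFDerivAt
      · exact (hD2d q hq θ).hasFDerivAt
    -- differentiate the commutation identity in θ
    have hΦ1 : HasDerivAt (fun t => D2 (q, t) (f q t, 0) ((0, 0), 1))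
        (D3 (q, θ) ((0, 0), 1) (f q θ, 0) ((0, 0), 1)
          + D2 (q, θ) (D (q, θ) ((0, 0), 1), 0) ((0, 0), 1)) θ := by
      have hc1 : HasDerivAt (fun t => D2 (q, t)) (D3 (q, θ) ((0, 0), 1)) θ :=
        sliceHasDerivAt (G := D2) (hD2d q hq θ)
      have hu : HasDerivAt (fun t => ((f q t, 0) : (ℝ × ℝ) × ℝ)) ((D (q, θ) ((0, 0), 1), 0)) θ :=
        (hfq' q hq θ).prodMk (hasDerivAt_const θ (0 : ℝ))
      have h := (hc1.clm_apply hu).clm_apply (hasDerivAt_const θ (((0, 0), 1) : (ℝ × ℝ) × ℝ))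
      simpa using h
    have hΦ2 : HasDerivAt (fun t => D (q, t) (deriv (f q) t, 0))
        (D2 (q, θ) ((0, 0), 1) (deriv (f q) θ, 0)
          + D (q, θ) (D2 (q, θ) ((0, 0), 1) ((0, 0), 1), 0)) θ := by
      have hc1 : HasDerivAt (fun t => D (q, t)) (D2 (q, θ) ((0, 0), 1)) θ :=
        sliceHasDerivAt (hDd q hq θ)
      have hu : HasDerivAt (fun t => ((deriv (f q) t, 0) : (ℝ × ℝ) × ℝ))
          ((D2 (q, θ) ((0, 0), 1) ((0, 0), 1), 0)) θ :=
        (hf'' q hq θ).prodMk (hasDerivAt_const θ (0 : ℝ))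
      simpa using hc1.clm_apply hu
    have hΦ0 : (fun t => D2 (q, t) (f q t, 0) ((0, 0), 1) - D (q, t) (deriv (f q) t, 0))
        = fun _ => (0 : ℝ × ℝ) := by
      funext t
      have h := hcomm t q hq
      simp only [lieBracket2] at h
      rw [hqg_fd q hq t (f q t), hqf_fd q hq t (deriv (f q) t)] at h
      exact h
    have hder0 : HasDerivAt
        (fun t => D2 (q, t) (f q t, 0) ((0, 0), 1) - D (q, t) (deriv (f q) t, 0)) 0 θ := by
      rw [hΦ0]; exact hasDerivAt_const θ 0
    have hstar := (hΦ1.sub hΦ2).unique hder0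
    have hs2 : D2 (q, θ) (D (q, θ) ((0, 0), 1), 0) ((0, 0), 1)
        = D2 (q, θ) ((0, 0), 1) (D (q, θ) ((0, 0), 1), 0) := hsym2 _ _
    have hs3 : D3 (q, θ) ((0, 0), 1) (f q θ, 0) ((0, 0), 1)
        = D3 (q, θ) (f q θ, 0) ((0, 0), 1) ((0, 0), 1) := by
      have h := hsym3 (((0, 0), 1) : (ℝ × ℝ) × ℝ) ((f q θ, 0) : (ℝ × ℝ) × ℝ)
      exact congrArg (fun L => L (((0, 0), 1) : (ℝ × ℝ) × ℝ)) h
    have hgθ : deriv (f q) θ = D (q, θ) ((0, 0), 1) := hg q hq θ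
    have hstarstar : D3 (q, θ) (f q θ, 0) ((0, 0), 1) ((0, 0), 1)
        = D (q, θ) (D2 (q, θ) ((0, 0), 1) ((0, 0), 1), 0) := by
      rw [hgθ, hs3, hs2] at hstar
      have h2 := sub_eq_zero.mp hstar
      rw [add_comm (D3 (q, θ) (f q θ, 0) ((0, 0), 1) ((0, 0), 1))] at h2
      exact add_left_cancel h2
    -- Way 1: the q-derivative of f'' via D3
    have hqg2_fd : ∀ v : ℝ × ℝ,
        fderiv ℝ (fun x => deriv (deriv (f x)) θ) q v
          = D3 (q, θ) (v, 0) ((0, 0), 1) ((0, 0), 1) := by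
      intro v
      have h1 : HasFDerivAt (fun x => D2 (x, θ))
          ((D3 (q, θ)).comp ((ContinuousLinearMap.id ℝ (ℝ × ℝ)).prod 0)) q :=
        sliceHasFDerivAt (G := D2) (hD2d q hq θ)
      have h2 := (h1.clm_apply (hasFDerivAt_const (((0, 0), 1) : (ℝ × ℝ) × ℝ) q)).clm_apply
        (hasFDerivAt_const (((0, 0), 1) : (ℝ × ℝ) × ℝ) q)
      have hev : (fun x => deriv (deriv (f x)) θ) =ᶠ[nhds q]
          (fun x => D2 (x, θ) ((0, 0), 1) ((0, 0), 1)) := by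
        filter_upwards [hU.mem_nhds hq] with x hx
        exact hf''val x hx θ
      rw [(h2.congr_of_eventuallyEq hev).fderiv]
      simp
    -- Way 2: via (S2)
    have hbd : DifferentiableAt ℝ (fun p : (ℝ × ℝ) × ℝ => b p.1 p.2) (q, θ) :=
      (hb.contDiffAt (hΩ.mem_nhds (hmem q hq θ))).differentiableAt (by simp)
    have hbF : HasFDerivAt (fun x => b x θ)
        ((fderiv ℝ (fun p : (ℝ × ℝ) × ℝ => b p.1 p.2) (q, θ)).comp
          ((ContinuousLinearMap.id ℝ (ℝ × ℝ)).prod 0)) q :=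
      sliceHasFDerivAt hbd
    have hR := (((hqf q hq θ).const_smul ε).neg).sub (hbF.smul (hqg' q hq θ))
    have hev2 : (fun x => deriv (deriv (f x)) θ) =ᶠ[nhds q]
        (fun x => -(ε • f x θ) - b x θ • deriv (f x) θ) := by
      filter_upwards [hU.mem_nhds hq] with x hx
      exact hS2 x hx θ
    have hR' := hR.congr_of_eventuallyEq hev2
    set Bclm := (fderiv ℝ (fun p : (ℝ × ℝ) × ℝ => b p.1 p.2) (q, θ)).comp
      ((ContinuousLinearMap.id ℝ (ℝ × ℝ)).prod 0) with hBclm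
    have hkey : D3 (q, θ) (f q θ, 0) ((0, 0), 1) ((0, 0), 1)
        = -(ε • D (q, θ) (f q θ, 0))
          - (b q θ • D2 (q, θ) (f q θ, 0) ((0, 0), 1) + Bclm (f q θ) • deriv (f q) θ) := by
      rw [← hqg2_fd (f q θ), hR'.fderiv]
      simp
    -- rewrite the right-hand side of ★★ using (S2) and linearity
    have hS2q : D2 (q, θ) ((0, 0), 1) ((0, 0), 1)
        = -(ε • f q θ) - b q θ • deriv (f q) θ := by
      rw [← hf''val q hq θ]; exact hS2 q hq θ
    have hvec : ((-(ε • f q θ) - b q θ • deriv (f q) θ, (0 : ℝ)) : (ℝ × ℝ) × ℝ)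
        = -(ε • ((f q θ, 0) : (ℝ × ℝ) × ℝ)) - b q θ • ((deriv (f q) θ, 0) : (ℝ × ℝ) × ℝ) := by
      simp [Prod.ext_iff]
    have hlin : D (q, θ) (D2 (q, θ) ((0, 0), 1) ((0, 0), 1), 0)
        = -(ε • D (q, θ) (f q θ, 0)) - b q θ • D (q, θ) (deriv (f q) θ, 0) := by
      rw [hS2q, hvec, map_sub, map_neg, map_smul, map_smul]
    -- the commutation at θ itself
    have hcommθ : D2 (q, θ) (f q θ, 0) ((0, 0), 1) = D (q, θ) (deriv (f q) θ, 0) := by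
      have h := congrFun hΦ0 θ
      exact sub_eq_zero.mp h
    -- conclude β = 0
    have hβg : Bclm (f q θ) • deriv (f q) θ = 0 := by
      have e2 := hstarstar.trans hlin
      rw [hcommθ] at hkey
      have h := e2.symm.trans hkey
      have h2 := sub_right_inj.mp h
      exact (left_eq_add.mp h2).symm ▸ rfl
    have hgne : deriv (f q) θ ≠ 0 := by
      have h := (hS1 q hq θ).ne_zero 1
      simpa using h
    have hβ : Bclm (f q θ) = 0 := by
      rcases smul_eq_zero.mp hβg with h | h
      · exact h
      · exact absurd h hgne
    simp only [LH]
    rw [hbF.fderiv, hc0 q hq θ, hβ]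
    ring
end

section
/- Under assumptions (S1)–(S3), if the centro-affine curvature b vanishes identically (the Riemannian case), then the control curvature κ := L_{H'}c − L_H c' satisfies ∂κ/∂θ = 0 on U × ℝ, i.e., κ is a function of the base point q alone. -/
open Set

namespace RCCH

noncomputable section

variable {E : Type*} [NormedAddCommGroup E] [NormedSpace ℝ E]

def ee : (ℝ × ℝ) × ℝ := ((0, 0), 1)

def ι : (ℝ × ℝ) →L[ℝ] (ℝ × ℝ) × ℝ := ContinuousLinearMap.inl ℝ (ℝ × ℝ) ℝ

lemma curve_hasDerivAt (q : ℝ × ℝ) (θ : ℝ) :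
    HasDerivAt (fun t : ℝ => ((q, t) : (ℝ × ℝ) × ℝ)) ee θ :=
  (hasDerivAt_const θ q).prodMk (hasDerivAt_id θ)

lemma sliceV (g : (ℝ × ℝ) × ℝ → E) {q : ℝ × ℝ} {θ : ℝ}
    (hg : DifferentiableAt ℝ g (q, θ)) :
    HasDerivAt (fun t => g (q, t)) (fderiv ℝ g (q, θ) ee) θ :=
  hg.hasFDerivAt.comp_hasDerivAt θ (curve_hasDerivAt q θ)

lemma sliceH (g : (ℝ × ℝ) × ℝ → E) {q : ℝ × ℝ} {θ : ℝ}
    (hg : DifferentiableAt ℝ g (q, θ)) :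
    HasFDerivAt (fun p => g (p, θ)) ((fderiv ℝ g (q, θ)).comp ι) q :=
  hg.hasFDerivAt.comp q (hasFDerivAt_prodMk_left q θ)

lemma diffAt (g : (ℝ × ℝ) × ℝ → E) {s : Set ((ℝ × ℝ) × ℝ)} (hs : IsOpen s)
    (hg : ContDiffOn ℝ (⊤ : ℕ∞) g s) {z} (hz : z ∈ s) :
    DifferentiableAt ℝ g z :=
  ((hg.differentiableOn (by norm_num)).differentiableAt (hs.mem_nhds hz))

lemma dstep (g : (ℝ × ℝ) × ℝ → E) {s : Set ((ℝ × ℝ) × ℝ)} (hs : IsOpen s)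
    (hg : ContDiffOn ℝ (⊤ : ℕ∞) g s) :
    ContDiffOn ℝ (⊤ : ℕ∞) (fun z => fderiv ℝ g z ee) s :=
  (hg.fderiv_of_isOpen hs (by norm_num)).clm_apply contDiffOn_const

lemma fderiv_cds (g : (ℝ × ℝ) × ℝ → E) {s : Set ((ℝ × ℝ) × ℝ)} (hs : IsOpen s)
    (hg : ContDiffOn ℝ (⊤ : ℕ∞) g s) :
    ContDiffOn ℝ (⊤ : ℕ∞) (fderiv ℝ g) s :=
  hg.fderiv_of_isOpen hs (by norm_num)

lemma mixed (g : (ℝ × ℝ) × ℝ → E) {s : Set ((ℝ × ℝ) × ℝ)} (hs : IsOpen s)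
    (hg : ContDiffOn ℝ (⊤ : ℕ∞) g s) {z} (hz : z ∈ s) (w : (ℝ × ℝ) × ℝ) :
    (fderiv ℝ (fderiv ℝ g) z ee) w = fderiv ℝ (fun y => fderiv ℝ g y ee) z w := by
  have hd : DifferentiableAt ℝ (fderiv ℝ g) z := diffAt _ hs (fderiv_cds g hs hg) hz
  have hev : ∀ᶠ y in nhds z, HasFDerivAt g (fderiv ℝ g y) y := by
    filter_upwards [hs.mem_nhds hz] with y hy
    exact (diffAt g hs hg hy).hasFDerivAt
  have hsym := second_derivative_symmetric_of_eventually hev hd.hasFDerivAt ee w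
  rw [fderiv_clm_apply hd (differentiableAt_const ee)]
  simp [hsym]

end

end RCCH

open RCCH

/-- Under assumptions (S1)–(S3), in the Riemannian case `b ≡ 0` the control curvature
`κ := L_{H′}c − L_H c′` satisfies `∂κ/∂θ = 0` on `U × ℝ`, i.e. `κ` is a function of
the base point alone. -/
theorem riemannian_case_curvature_is_horizontal
    (U : Set (ℝ × ℝ)) (hU : IsOpen U) (hUconn : IsConnected U)
    (ε : ℝ) (hε : ε = 1 ∨ ε = -1)
    (f : ℝ × ℝ → ℝ → ℝ × ℝ) (b c : ℝ × ℝ → ℝ → ℝ)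
    (hf : ContDiffOn ℝ (⊤ : ℕ∞) (fun p : (ℝ × ℝ) × ℝ => f p.1 p.2) (U ×ˢ univ))
    (hb : ContDiffOn ℝ (⊤ : ℕ∞) (fun p : (ℝ × ℝ) × ℝ => b p.1 p.2) (U ×ˢ univ))
    (hc : ContDiffOn ℝ (⊤ : ℕ∞) (fun p : (ℝ × ℝ) × ℝ => c p.1 p.2) (U ×ˢ univ))
    (hS1 : ∀ q ∈ U, ∀ θ : ℝ, LinearIndependent ℝ ![f q θ, deriv (f q) θ])
    (hS2 : ∀ q ∈ U, ∀ θ : ℝ,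
      deriv (deriv (f q)) θ = -(ε • f q θ) - b q θ • deriv (f q) θ)
    (hS3 : ∀ θ : ℝ, ∀ q ∈ U,
      lieBracket2 (fun p => f p θ) (fun p => deriv (f p) θ) q
        = -((ε * c q θ) • f q θ) - (deriv (c q) θ + b q θ * c q θ) • deriv (f q) θ)
    (hb0 : ∀ q ∈ U, ∀ θ : ℝ, b q θ = 0) :
    ∀ q ∈ U, ∀ θ : ℝ, deriv (controlCurvature f c q) θ = 0 := by
  have hΩ : IsOpen (U ×ˢ (univ : Set ℝ)) := hU.prod isOpen_univ
  set Ω : Set ((ℝ × ℝ) × ℝ) := U ×ˢ (univ : Set ℝ) with hΩdef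
  set F : (ℝ × ℝ) × ℝ → ℝ × ℝ := fun z => f z.1 z.2 with hFdef
  set C : (ℝ × ℝ) × ℝ → ℝ := fun z => c z.1 z.2 with hCdef
  set F' : (ℝ × ℝ) × ℝ → ℝ × ℝ := fun z => fderiv ℝ F z ee with hF'def
  set F'' : (ℝ × ℝ) × ℝ → ℝ × ℝ := fun z => fderiv ℝ F' z ee with hF''def
  set C' : (ℝ × ℝ) × ℝ → ℝ := fun z => fderiv ℝ C z ee with hC'def
  set C'' : (ℝ × ℝ) × ℝ → ℝ := fun z => fderiv ℝ C' z ee with hC''def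
  have hFs : ContDiffOn ℝ (⊤ : ℕ∞) F Ω := hf.of_le (by simp)
  have hCs : ContDiffOn ℝ (⊤ : ℕ∞) C Ω := hc.of_le (by simp)
  have hF's : ContDiffOn ℝ (⊤ : ℕ∞) F' Ω := dstep F hΩ hFs
  have hF''s : ContDiffOn ℝ (⊤ : ℕ∞) F'' Ω := dstep F' hΩ hF's
  have hC's : ContDiffOn ℝ (⊤ : ℕ∞) C' Ω := dstep C hΩ hCs
  have hC''s : ContDiffOn ℝ (⊤ : ℕ∞) C'' Ω := dstep C' hΩ hC's
  have hmem : ∀ (q : ℝ × ℝ), q ∈ U → ∀ (θ : ℝ), ((q, θ) : (ℝ × ℝ) × ℝ) ∈ Ω :=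
    fun q hq θ => ⟨hq, mem_univ θ⟩
  -- translation lemmas
  have t1 : ∀ q ∈ U, ∀ θ : ℝ, deriv (f q) θ = F' (q, θ) := by
    intro q hq θ
    exact (sliceV F (diffAt F hΩ hFs (hmem q hq θ))).deriv
  have u1 : ∀ q ∈ U, ∀ θ : ℝ, deriv (c q) θ = C' (q, θ) := by
    intro q hq θ
    exact (sliceV C (diffAt C hΩ hCs (hmem q hq θ))).deriv
  have t2 : ∀ q ∈ U, ∀ θ : ℝ, deriv (deriv (f q)) θ = F'' (q, θ) := by
    intro q hq θ
    have h : deriv (f q) = fun t => F' (q, t) := funext fun t => t1 q hq t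
    rw [h]
    exact (sliceV F' (diffAt F' hΩ hF's (hmem q hq θ))).deriv
  have u2 : ∀ q ∈ U, ∀ θ : ℝ, deriv (deriv (c q)) θ = C'' (q, θ) := by
    intro q hq θ
    have h : deriv (c q) = fun t => C' (q, t) := funext fun t => u1 q hq t
    rw [h]
    exact (sliceV C' (diffAt C' hΩ hC's (hmem q hq θ))).deriv
  have t3 : ∀ q ∈ U, ∀ θ : ℝ,
      fderiv ℝ (fun p => f p θ) q = (fderiv ℝ F (q, θ)).comp ι := by
    intro q hq θ
    exact (sliceH F (diffAt F hΩ hFs (hmem q hq θ))).fderiv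
  have u3 : ∀ q ∈ U, ∀ θ : ℝ,
      fderiv ℝ (fun p => c p θ) q = (fderiv ℝ C (q, θ)).comp ι := by
    intro q hq θ
    exact (sliceH C (diffAt C hΩ hCs (hmem q hq θ))).fderiv
  have t4 : ∀ q ∈ U, ∀ θ : ℝ,
      fderiv ℝ (fun p => deriv (f p) θ) q = (fderiv ℝ F' (q, θ)).comp ι := by
    intro q hq θ
    have hev : (fun p => deriv (f p) θ) =ᶠ[nhds q] (fun p => F' (p, θ)) := by
      filter_upwards [hU.mem_nhds hq] with p hp
      exact t1 p hp θ
    rw [hev.fderiv_eq]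
    exact (sliceH F' (diffAt F' hΩ hF's (hmem q hq θ))).fderiv
  have u4 : ∀ q ∈ U, ∀ θ : ℝ,
      fderiv ℝ (fun p => deriv (c p) θ) q = (fderiv ℝ C' (q, θ)).comp ι := by
    intro q hq θ
    have hev : (fun p => deriv (c p) θ) =ᶠ[nhds q] (fun p => C' (p, θ)) := by
      filter_upwards [hU.mem_nhds hq] with p hp
      exact u1 p hp θ
    rw [hev.fderiv_eq]
    exact (sliceH C' (diffAt C' hΩ hC's (hmem q hq θ))).fderiv
  -- translated (S2) with b ≡ 0 :  F'' = -(ε • F) on Ω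
  have S2 : ∀ z ∈ Ω, F'' z = -(ε • F z) := by
    rintro ⟨q, θ⟩ ⟨hq, -⟩
    have h := hS2 q hq θ
    rw [t2 q hq θ, hb0 q hq θ] at h
    simpa using h
  have dS2 : ∀ z ∈ Ω, fderiv ℝ F'' z = -(ε • fderiv ℝ F z) := by
    intro z hz
    have hev : F'' =ᶠ[nhds z] fun y => -(ε • F y) := by
      filter_upwards [hΩ.mem_nhds hz] with y hy
      exact S2 y hy
    rw [hev.fderiv_eq]
    exact (((diffAt F hΩ hFs hz).hasFDerivAt.const_smul ε).neg).fderiv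
  -- translated (S3)
  have S3 : ∀ q ∈ U, ∀ θ : ℝ,
      fderiv ℝ F' (q, θ) (ι (F (q, θ))) - fderiv ℝ F (q, θ) (ι (F' (q, θ)))
        = -((ε * C (q, θ)) • F (q, θ)) - C' (q, θ) • F' (q, θ) := by
    intro q hq θ
    have h := hS3 θ q hq
    simp only [lieBracket2] at h
    rw [t3 q hq θ, t4 q hq θ, t1 q hq θ, u1 q hq θ, hb0 q hq θ] at h
    simp only [zero_mul, add_zero, ContinuousLinearMap.comp_apply] at h
    exact h
  -- Step 1 : C'' = -(ε C) on Ω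
  have hC''eq : ∀ q ∈ U, ∀ θ : ℝ, C'' (q, θ) = -(ε * C (q, θ)) := by
    intro q hq θ
    have hz := hmem q hq θ
    have dF : DifferentiableAt ℝ F (q, θ) := diffAt F hΩ hFs hz
    have dF' : DifferentiableAt ℝ F' (q, θ) := diffAt F' hΩ hF's hz
    have dC : DifferentiableAt ℝ C (q, θ) := diffAt C hΩ hCs hz
    have dC' : DifferentiableAt ℝ C' (q, θ) := diffAt C' hΩ hC's hz
    have dAF : DifferentiableAt ℝ (fderiv ℝ F) (q, θ) := diffAt _ hΩ (fderiv_cds F hΩ hFs) hz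
    have dAF' : DifferentiableAt ℝ (fderiv ℝ F') (q, θ) := diffAt _ hΩ (fderiv_cds F' hΩ hF's) hz
    have hFv : HasDerivAt (fun t => F (q, t)) (F' (q, θ)) θ := sliceV F dF
    have hF'v : HasDerivAt (fun t => F' (q, t)) (F'' (q, θ)) θ := sliceV F' dF'
    have hCv : HasDerivAt (fun t => C (q, t)) (C' (q, θ)) θ := sliceV C dC
    have hC'v : HasDerivAt (fun t => C' (q, t)) (C'' (q, θ)) θ := sliceV C' dC'
    have hAFv : HasDerivAt (fun t => fderiv ℝ F (q, t)) (fderiv ℝ (fderiv ℝ F) (q, θ) ee) θ :=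
      sliceV _ dAF
    have hAF'v : HasDerivAt (fun t => fderiv ℝ F' (q, t)) (fderiv ℝ (fderiv ℝ F') (q, θ) ee) θ :=
      sliceV _ dAF'
    have hιF : HasDerivAt (fun t => ι (F (q, t))) (ι (F' (q, θ))) θ :=
      ι.hasFDerivAt.comp_hasDerivAt θ hFv
    have hιF' : HasDerivAt (fun t => ι (F' (q, t))) (ι (F'' (q, θ))) θ :=
      ι.hasFDerivAt.comp_hasDerivAt θ hF'v
    have hL : HasDerivAt
        (fun t => fderiv ℝ F' (q, t) (ι (F (q, t))) - fderiv ℝ F (q, t) (ι (F' (q, t))))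
        ((fderiv ℝ (fderiv ℝ F') (q, θ) ee) (ι (F (q, θ))) + fderiv ℝ F' (q, θ) (ι (F' (q, θ)))
          - ((fderiv ℝ (fderiv ℝ F) (q, θ) ee) (ι (F' (q, θ)))
             + fderiv ℝ F (q, θ) (ι (F'' (q, θ))))) θ :=
      (hAF'v.clm_apply hιF).sub (hAFv.clm_apply hιF')
    have hR : HasDerivAt (fun t => -((ε * C (q, t)) • F (q, t)) - C' (q, t) • F' (q, t))
        (-((ε * C (q, θ)) • F' (q, θ) + (ε * C' (q, θ)) • F (q, θ))
          - (C' (q, θ) • F'' (q, θ) + C'' (q, θ) • F' (q, θ))) θ :=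
      (((hCv.const_mul ε).smul hFv).neg).sub (hC'v.smul hF'v)
    have hfun : (fun t => fderiv ℝ F' (q, t) (ι (F (q, t))) - fderiv ℝ F (q, t) (ι (F' (q, t))))
        = fun t => -((ε * C (q, t)) • F (q, t)) - C' (q, t) • F' (q, t) :=
      funext fun t => S3 q hq t
    rw [hfun] at hL
    have heq := hL.unique hR
    have m1 : (fderiv ℝ (fderiv ℝ F') (q, θ) ee) (ι (F (q, θ)))
        = fderiv ℝ F'' (q, θ) (ι (F (q, θ))) := by
      rw [hF''def]; exact mixed F' hΩ hF's hz _
    have m2 : (fderiv ℝ (fderiv ℝ F) (q, θ) ee) (ι (F' (q, θ)))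
        = fderiv ℝ F' (q, θ) (ι (F' (q, θ))) := by
      rw [hF'def]; exact mixed F hΩ hFs hz _
    rw [m1, m2, dS2 _ hz, S2 _ hz] at heq
    simp only [ContinuousLinearMap.neg_apply, ContinuousLinearMap.smul_apply, map_neg, map_smul,
      smul_neg, neg_neg, smul_smul] at heq
    have key : (ε * C (q, θ) + C'' (q, θ)) • F' (q, θ) = 0 := by
      linear_combination (norm := module) heq
    have hne : F' (q, θ) ≠ 0 := by
      have h1 := (hS1 q hq θ).ne_zero 1
      simp only [Matrix.cons_val_one, Matrix.head_cons] at h1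
      rwa [t1 q hq θ] at h1
    rcases smul_eq_zero.mp key with h | h
    · linarith
    · exact absurd h hne
  -- C'' = -(ε C) as identity on Ω, and its fderiv
  have S2C : ∀ z ∈ Ω, C'' z = -(ε * C z) := by
    rintro ⟨q, θ⟩ ⟨hq, -⟩
    exact hC''eq q hq θ
  have dS2C : ∀ z ∈ Ω, fderiv ℝ C'' z = -(ε • fderiv ℝ C z) := by
    intro z hz
    have hev : C'' =ᶠ[nhds z] fun y => -(ε • C y) := by
      filter_upwards [hΩ.mem_nhds hz] with y hy
      rw [S2C y hy]; simp [smul_eq_mul]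
    rw [hev.fderiv_eq]
    exact (((diffAt C hΩ hCs hz).hasFDerivAt.const_smul ε).neg).fderiv
  intro q hq θ
  have hz := hmem q hq θ
  -- κ along the vertical line through q
  have hκ : controlCurvature f c q = fun t =>
      fderiv ℝ C (q, t) (ι (F' (q, t))) - C' (q, t) * C' (q, t)
        - (fderiv ℝ C' (q, t) (ι (F (q, t))) - C (q, t) * C'' (q, t)) := by
    funext t
    simp only [controlCurvature, LH, LH']
    rw [u3 q hq t, u4 q hq t, t1 q hq t, u1 q hq t]
    have h2 : deriv (fun s => deriv (c q) s) t = C'' (q, t) := u2 q hq t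
    rw [h2]
    simp only [ContinuousLinearMap.comp_apply]
    rfl
  rw [hκ]
  have dF : DifferentiableAt ℝ F (q, θ) := diffAt F hΩ hFs hz
  have dF' : DifferentiableAt ℝ F' (q, θ) := diffAt F' hΩ hF's hz
  have dC : DifferentiableAt ℝ C (q, θ) := diffAt C hΩ hCs hz
  have dC' : DifferentiableAt ℝ C' (q, θ) := diffAt C' hΩ hC's hz
  have dC'' : DifferentiableAt ℝ C'' (q, θ) := diffAt C'' hΩ hC''s hz
  have dAC : DifferentiableAt ℝ (fderiv ℝ C) (q, θ) := diffAt _ hΩ (fderiv_cds C hΩ hCs) hz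
  have dAC' : DifferentiableAt ℝ (fderiv ℝ C') (q, θ) := diffAt _ hΩ (fderiv_cds C' hΩ hC's) hz
  have hFv : HasDerivAt (fun t => F (q, t)) (F' (q, θ)) θ := sliceV F dF
  have hF'v : HasDerivAt (fun t => F' (q, t)) (F'' (q, θ)) θ := sliceV F' dF'
  have hCv : HasDerivAt (fun t => C (q, t)) (C' (q, θ)) θ := sliceV C dC
  have hC'v : HasDerivAt (fun t => C' (q, t)) (C'' (q, θ)) θ := sliceV C' dC'
  have hC''v : HasDerivAt (fun t => C'' (q, t)) (fderiv ℝ C'' (q, θ) ee) θ := sliceV C'' dC''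
  have hACv : HasDerivAt (fun t => fderiv ℝ C (q, t)) (fderiv ℝ (fderiv ℝ C) (q, θ) ee) θ :=
    sliceV _ dAC
  have hAC'v : HasDerivAt (fun t => fderiv ℝ C' (q, t)) (fderiv ℝ (fderiv ℝ C') (q, θ) ee) θ :=
    sliceV _ dAC'
  have hιF : HasDerivAt (fun t => ι (F (q, t))) (ι (F' (q, θ))) θ :=
    ι.hasFDerivAt.comp_hasDerivAt θ hFv
  have hιF' : HasDerivAt (fun t => ι (F' (q, t))) (ι (F'' (q, θ))) θ :=
    ι.hasFDerivAt.comp_hasDerivAt θ hF'v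
  have P1 : HasDerivAt (fun t => fderiv ℝ C (q, t) (ι (F' (q, t))))
      ((fderiv ℝ (fderiv ℝ C) (q, θ) ee) (ι (F' (q, θ))) + fderiv ℝ C (q, θ) (ι (F'' (q, θ)))) θ :=
    hACv.clm_apply hιF'
  have P2 : HasDerivAt (fun t => C' (q, t) * C' (q, t))
      (C'' (q, θ) * C' (q, θ) + C' (q, θ) * C'' (q, θ)) θ := hC'v.mul hC'v
  have P3 : HasDerivAt (fun t => fderiv ℝ C' (q, t) (ι (F (q, t))))
      ((fderiv ℝ (fderiv ℝ C') (q, θ) ee) (ι (F (q, θ))) + fderiv ℝ C' (q, θ) (ι (F' (q, θ)))) θ :=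
    hAC'v.clm_apply hιF
  have P4 : HasDerivAt (fun t => C (q, t) * C'' (q, t))
      (C' (q, θ) * C'' (q, θ) + C (q, θ) * (fderiv ℝ C'' (q, θ) ee)) θ := hCv.mul hC''v
  have Ptot : HasDerivAt (fun t => fderiv ℝ C (q, t) (ι (F' (q, t))) - C' (q, t) * C' (q, t)
      - (fderiv ℝ C' (q, t) (ι (F (q, t))) - C (q, t) * C'' (q, t))) _ θ :=
    (P1.sub P2).sub (P3.sub P4)
  rw [Ptot.deriv]
  have m1 : (fderiv ℝ (fderiv ℝ C) (q, θ) ee) (ι (F' (q, θ)))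
      = fderiv ℝ C' (q, θ) (ι (F' (q, θ))) := by
    rw [hC'def]; exact mixed C hΩ hCs hz _
  have m2 : (fderiv ℝ (fderiv ℝ C') (q, θ) ee) (ι (F (q, θ)))
      = fderiv ℝ C'' (q, θ) (ι (F (q, θ))) := by
    rw [hC''def]; exact mixed C' hΩ hC's hz _
  rw [m1, m2, dS2C _ hz, S2 _ hz, hC''eq q hq θ]
  simp only [ContinuousLinearMap.neg_apply, ContinuousLinearMap.smul_apply, map_neg, map_smul,
    smul_eq_mul]
  simp only [hC'def]
  ring
end

section
/- Let φ : ℝ³ → ℝ be φ(q₁,q₂,u) = 1 + 2q₁ cos u + 2q₂ sin u, let Ω = {(q₁,q₂,u) ∈ ℝ³ : φ(q₁,q₂,u) > 0}, and let h be the vector field on Ω defined by h(q₁,q₂,u) = ((cos u)/φ, (sin u)/φ, 0). Then on Ω: (i) the Lie derivative L_h φ equals 2/φ; (ii) the Schwarzian derivative S(φ) := φ · L_h(L_h φ / 2) − (L_h φ / 2)² equals −3/φ²; and (iii) consequently the control curvature κ = φ⁻²·(−S(φ)) equals 3(1 + 2q₁ cos u + 2q₂ sin u)⁻⁴, which is strictly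 positive on Ω. -/
open Set Real

noncomputable section

/-- `φ(q₁,q₂,u) = 1 + 2 q₁ cos u + 2 q₂ sin u`, for the co-Zermelo problem on the
Euclidean plane with drift one-form `Υ = d(q₁² + q₂²)`.  Points of `ℝ³` are written
`p = ((q₁,q₂),u)`. -/
def phiCZ : (ℝ × ℝ) × ℝ → ℝ :=
  fun p => 1 + 2 * p.1.1 * Real.cos p.2 + 2 * p.1.2 * Real.sin p.2

/-- The domain `Ω = {φ > 0}`. -/
def OmegaCZ : Set ((ℝ × ℝ) × ℝ) := {p | 0 < phiCZ p}

/-- The Hamiltonian vector field `h = ((cos u)/φ, (sin u)/φ, 0)` on `Ω`. -/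
def hamCZ : (ℝ × ℝ) × ℝ → (ℝ × ℝ) × ℝ :=
  fun p => ((Real.cos p.2 / phiCZ p, Real.sin p.2 / phiCZ p), 0)

/-- The Lie derivative `L_h a` of a function `a` along the field `h`. -/
def LhCZ (a : (ℝ × ℝ) × ℝ → ℝ) : (ℝ × ℝ) × ℝ → ℝ :=
  fun p => fderiv ℝ a p (hamCZ p)

/-- The Schwarzian derivative `S(φ) = φ · L_h(L_h φ / 2) − (L_h φ / 2)²`. -/
def SchwarzCZ : (ℝ × ℝ) × ℝ → ℝ :=
  fun p => phiCZ p * LhCZ (fun x => LhCZ phiCZ x / 2) p - (LhCZ phiCZ p / 2) ^ 2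

end

/-! Since `h` has no `u`-component and `φ(q, u) = 1 + 2⟨q, (cos u, sin u)⟩` is affine in `q`,
`L_h φ = 2 (cos² u + sin² u)/φ = 2/φ`. Hence `L_h φ / 2 = φ⁻¹`, the chain rule gives
`L_h (φ⁻¹) = -L_h φ / φ² = -2/φ³`, and `S(φ) = -2/φ² - 1/φ² = -3/φ²`. -/

lemma differentiable_phiCZ : Differentiable ℝ phiCZ := by
  unfold phiCZ
  fun_prop

lemma phiCZ_add_smul_horizontal (p : (ℝ × ℝ) × ℝ) (w : ℝ × ℝ) (t : ℝ) :
    phiCZ (p + t • (w, 0)) = phiCZ p + t * (2 * (w.1 * cos p.2 + w.2 * sin p.2)) := by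
  simp only [phiCZ, Prod.fst_add, Prod.snd_add, Prod.smul_fst, Prod.smul_snd, smul_eq_mul,
    mul_zero, add_zero]
  ring

lemma fderiv_phiCZ_horizontal (p : (ℝ × ℝ) × ℝ) (w : ℝ × ℝ) :
    fderiv ℝ phiCZ p (w, 0) = 2 * (w.1 * cos p.2 + w.2 * sin p.2) := by
  rw [← differentiable_phiCZ.differentiableAt.lineDeriv_eq_fderiv]
  refine HasLineDerivAt.lineDeriv ?_
  rw [HasLineDerivAt]
  simp_rw [phiCZ_add_smul_horizontal]
  simpa using ((hasDerivAt_id (0 : ℝ)).mul_const _).const_add (phiCZ p)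

lemma LhCZ_phiCZ (p : (ℝ × ℝ) × ℝ) : LhCZ phiCZ p = 2 / phiCZ p := by
  rw [LhCZ, hamCZ, fderiv_phiCZ_horizontal]
  calc 2 * (cos p.2 / phiCZ p * cos p.2 + sin p.2 / phiCZ p * sin p.2)
      = 2 * (cos p.2 ^ 2 + sin p.2 ^ 2) / phiCZ p := by ring
    _ = 2 / phiCZ p := by rw [cos_sq_add_sin_sq, mul_one]

lemma LhCZ_inv {a : (ℝ × ℝ) × ℝ → ℝ} {p : (ℝ × ℝ) × ℝ} (ha : DifferentiableAt ℝ a p)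
    (hp : a p ≠ 0) : LhCZ (fun x => (a x)⁻¹) p = -LhCZ a p / a p ^ 2 := by
  have hinv : HasFDerivAt (fun x => (a x)⁻¹) (-(a p ^ 2)⁻¹ • fderiv ℝ a p) p :=
    (hasDerivAt_inv hp).comp_hasFDerivAt p ha.hasFDerivAt
  rw [LhCZ, hinv.fderiv, LhCZ]
  simp only [smul_apply, smul_eq_mul]
  ring

lemma SchwarzCZ_eq_neg_three_div {p : (ℝ × ℝ) × ℝ} (hp : phiCZ p ≠ 0) : SchwarzCZ p = -3 / phiCZ p ^ 2 := by
  have half_LhCZ_phiCZ : (fun x => LhCZ phiCZ x / 2) = fun x => (phiCZ x)⁻¹ := by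
    funext x
    rw [LhCZ_phiCZ, div_div_cancel_left' two_ne_zero]
  rw [SchwarzCZ, half_LhCZ_phiCZ, LhCZ_inv differentiable_phiCZ.differentiableAt hp, LhCZ_phiCZ]
  field_simp
  ring

/-- **A straight-line system with nonzero curvature.** On `Ω = {φ > 0}`:
(i) `L_h φ = 2/φ`; (ii) `S(φ) = −3/φ²`; (iii) the control curvature
`κ = φ⁻²·(−S(φ))` equals `3 (1 + 2q₁ cos u + 2q₂ sin u)⁻⁴` and is strictly positive. -/
theorem coZermelo_curvature_positive :
    ∀ p ∈ OmegaCZ,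
      LhCZ phiCZ p = 2 / phiCZ p ∧
      SchwarzCZ p = -3 / phiCZ p ^ 2 ∧
      (phiCZ p ^ 2)⁻¹ * (-SchwarzCZ p)
        = 3 * ((1 + 2 * p.1.1 * Real.cos p.2 + 2 * p.1.2 * Real.sin p.2) ^ 4)⁻¹ ∧
      0 < (phiCZ p ^ 2)⁻¹ * (-SchwarzCZ p) := by
  intro p (hp : 0 < phiCZ p)
  have hS := SchwarzCZ_eq_neg_three_div hp.ne'
  have hκ : (phiCZ p ^ 2)⁻¹ * (-SchwarzCZ p) = 3 * (phiCZ p ^ 4)⁻¹ := by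
    rw [hS]
    field_simp
  exact ⟨LhCZ_phiCZ p, hS, hκ, by rw [hκ]; positivity⟩
end
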